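/- arXiv:1411.7739 — 5 statements merged into one kernel-verified Lean document; each statement's English description precedes it below -/
import Mathlib

section
/- (Reflection positivity of the torus Gibbs measure.) Let L₁, L₂ be positive integers, J > 0, h > 0, N ≥ 2 even, and β ≥ 0. Fix i ∈ {1,2} and an integer n, set c = 2nL_i + L_i − 1, let ϑ : 𝕋_N → 𝕋_N be the reflection replacing the i-th coordinate t_i by (c − t_i) mod NL_i and leaving the other coordinate unchanged (ϑ is an involution and satisfies h(ϑt) = h(t)), and let 𝕋ˡ = {t ∈ 𝕋_N : (2t_i − c) mod 2NL_i ≤ NL_i}. Then for all functions f, g : {−1,+1}^{𝕋_N} → ℝ that depend only on the restriction of the configuration to 𝕋ˡ: (i) Σ_σ f(σ)·g(σ∘ϑ)·e^{−βH_N(σ)} = Σ_σ g(σ)·f(σ∘ϑ)·e^{−βH_N(σ)}, and (ii) Σ_σ f(σ)·f(σ∘ϑ)·e^{−βH_N(σ)} ≥ 0, where (σ∘ϑ)(t) = σ(ϑ(t)). -/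
/-- The ±1 spin value of a Boolean spin configuration on the torus `(ℤ/aℤ) × (ℤ/bℤ)`. -/
noncomputable def spin {a b : ℕ} (σ : ZMod a × ZMod b → Bool) (t : ZMod a × ZMod b) : ℝ :=
  if σ t then 1 else -1

/-- Torus Hamiltonian with coupling `J` and external field `hf`:
`H(σ) = −J Σ_t [σ(t)σ(t+e₁) + σ(t)σ(t+e₂)] − Σ_t hf(t)σ(t)`. -/
noncomputable def ham {a b : ℕ} [NeZero a] [NeZero b] (J : ℝ)
    (hf : ZMod a × ZMod b → ℝ) (σ : ZMod a × ZMod b → Bool) : ℝ :=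
  -J * ∑ t, (spin σ t * spin σ (t + (1, 0)) + spin σ t * spin σ (t + (0, 1)))
    - ∑ t, hf t * spin σ t

/-- Cell-board external field on the torus, via canonical representatives:
`+h` if `⌊t₁/L₁⌋ + ⌊t₂/L₂⌋` is even, `−h` otherwise. -/
noncomputable def cellField {a b : ℕ} (L1 L2 : ℕ) (h : ℝ) (t : ZMod a × ZMod b) : ℝ :=
  if Even (t.1.val / L1 + t.2.val / L2) then h else -h

/-- Partition function `Z(β) = Σ_σ e^{−βH(σ)}`. -/
noncomputable def Zfun {a b : ℕ} [NeZero a] [NeZero b] (β J : ℝ)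
    (hf : ZMod a × ZMod b → ℝ) : ℝ :=
  ∑ σ : ZMod a × ZMod b → Bool, Real.exp (-β * ham J hf σ)

/-- Gibbs probability of a (finite) set of configurations. -/
noncomputable def gibbs {a b : ℕ} [NeZero a] [NeZero b] (β J : ℝ)
    (hf : ZMod a × ZMod b → ℝ) (E : Finset (ZMod a × ZMod b → Bool)) : ℝ :=
  (∑ σ ∈ E, Real.exp (-β * ham J hf σ)) / Zfun β J hf

/-- The reflection `ϑ` of the torus `𝕋_N = (ℤ/NL₁ℤ) × (ℤ/NL₂ℤ)` with respect to the
line `t_i = n·L_i + (L_i−1)/2` (`i ∈ {1,2}`, `n ∈ ℤ`): the `i`-th coordinate `t_i` is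
replaced by `(2nL_i + L_i − 1) − t_i` (mod `N·L_i`) and the other one is unchanged. -/
def reflMap (L1 L2 N : ℕ) (i : Fin 2) (n : ℤ) :
    ZMod (N * L1) × ZMod (N * L2) → ZMod (N * L1) × ZMod (N * L2) :=
  fun t =>
    if i = 0 then (((2 * n * L1 + L1 - 1 : ℤ) : ZMod (N * L1)) - t.1, t.2)
    else (t.1, ((2 * n * L2 + L2 - 1 : ℤ) : ZMod (N * L2)) - t.2)

/-- The left half `𝕋ˡ = {t ∈ 𝕋_N : (2t_i − c) mod 2NL_i ≤ NL_i}`, `c = 2nL_i + L_i − 1`. -/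
def leftHalf (L1 L2 N : ℕ) (i : Fin 2) (n : ℤ) : Set (ZMod (N * L1) × ZMod (N * L2)) :=
  {t | if i = 0
    then (2 * (t.1.val : ℤ) - (2 * n * L1 + L1 - 1)) % (2 * ((N : ℤ) * L1)) ≤ (N : ℤ) * L1
    else (2 * (t.2.val : ℤ) - (2 * n * L2 + L2 - 1)) % (2 * ((N : ℤ) * L2)) ≤ (N : ℤ) * L2}


/-!
Write `-βH(σ) = K(σ) + K(σ ∘ ϑ) + ∑ₜ dₜ σ(t) σ(ϑ t)` with `K` depending only on the left half
and `d ≥ 0` supported there: field terms and vertical bonds are split between the two halves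
(sites on the mirror with weight `1/2`), a horizontal bond not crossing the mirror is counted in
the left half through itself or through its mirror image, and the bonds crossing the mirror give
the coupling term. Since `e^{dσσ'} = cosh d + σσ' sinh d` for `σ, σ' = ±1`, the Gibbs weight is then a
nonnegative combination of products `A(σ) A(σ ∘ ϑ)` with `A` depending only on the left half,
and each `∑_σ G(σ) G(σ ∘ ϑ)` is nonnegative: splitting `σ` into its values on the mirror `ω` and
on the two open halves, it equals `∑_ω (∑_τ G(τ, ω))²`. Part (i) only needs the invariance of
`H` under `ϑ`. The cell-board field is `ϑ`-invariant because the mirror lies on a cell boundary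
and `N` is even; the reflection in the second coordinate is the first one conjugated by the
coordinate swap.
-/

open Finset Function

section DependsOn

variable {ι : Type*} {α : ι → Type*} {s : Set ι}

lemma DependsOn.mul {R : Type*} [Mul R] {f g : (Π i, α i) → R} (hf : DependsOn f s)
    (hg : DependsOn g s) : DependsOn (fun x ↦ f x * g x) s :=
  fun _ _ h ↦ congrArg₂ _ (hf h) (hg h)

lemma DependsOn.add {R : Type*} [Add R] {f g : (Π i, α i) → R} (hf : DependsOn f s)
    (hg : DependsOn g s) : DependsOn (fun x ↦ f x + g x) s :=
  fun _ _ h ↦ congrArg₂ _ (hf h) (hg h)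

lemma DependsOn.const_mul {R : Type*} [Mul R] {f : (Π i, α i) → R} (c : R)
    (hf : DependsOn f s) : DependsOn (fun x ↦ c * f x) s :=
  fun _ _ h ↦ congrArg (c * ·) (hf h)

lemma DependsOn.finset_sum {κ R : Type*} [AddCommMonoid R] {t : Finset κ}
    {f : κ → (Π i, α i) → R} (hf : ∀ k ∈ t, DependsOn (f k) s) :
    DependsOn (fun x ↦ ∑ k ∈ t, f k x) s :=
  fun _ _ h ↦ sum_congr rfl fun k hk ↦ hf k hk h

lemma DependsOn.finset_prod {κ R : Type*} [CommMonoid R] {t : Finset κ}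
    {f : κ → (Π i, α i) → R} (hf : ∀ k ∈ t, DependsOn (f k) s) :
    DependsOn (fun x ↦ ∏ k ∈ t, f k x) s :=
  fun _ _ h ↦ prod_congr rfl fun k hk ↦ hf k hk h

end DependsOn

lemma Function.Involutive.sum_mul_comp {X : Type*} [Fintype X] {ρ : X → X}
    (hρ : Involutive ρ) (u F : X → ℝ) : ∑ t, u (ρ t) * F t = ∑ t, u t * F (ρ t) :=
  Fintype.sum_equiv (hρ.toPerm ρ) _ _ fun t ↦ by simp [hρ t]

lemma Int.eq_zero_or_eq_or_eq_two_mul_of_dvd {n z : ℤ} (hn : 0 < n) (h : n ∣ z) (h0 : -n < z)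
    (h2 : z ≤ 2 * n) : z = 0 ∨ z = n ∨ z = 2 * n := by
  obtain ⟨k, rfl⟩ := h
  have : -1 < k := by nlinarith
  have : k ≤ 2 := by nlinarith
  interval_cases k <;> omega

/-- The reflection `v ↦ c - v`, `c = 2nL + L - 1`, maps the cell `⌊v / L⌋ = q` to the cell
`2n - q`, and reducing modulo `NL` shifts the cell index by a multiple of `N`. -/
lemma Int.even_emod_div_add_div {L N : ℤ} (hL : 0 < L) (hN : Even N) (n v : ℤ) :
    Even ((2 * n * L + L - 1 - v) % (N * L) / L + v / L) := by
  have hdiv : (L - 1 - v) / L = -(v / L) := by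
    have := Int.emod_add_mul_ediv v L
    have := Int.emod_nonneg v hL.ne'
    have := Int.emod_lt_of_pos v hL
    rw [show L - 1 - v = (L - 1 - v % L) + -(v / L) * L by linarith,
      Int.add_mul_ediv_right _ _ hL.ne', Int.ediv_eq_zero_of_lt (by omega) (by omega), zero_add]
  set q := (2 * n * L + L - 1 - v) / (N * L)
  have hsum : (2 * n * L + L - 1 - v) % (N * L) / L + v / L = 2 * n - N * q := by
    rw [Int.emod_def, show 2 * n * L + L - 1 - v - N * L * q = (L - 1 - v) + (2 * n - N * q) * L by
      ring, Int.add_mul_ediv_right _ _ hL.ne', hdiv]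
    ring
  rw [hsum]
  exact (even_two_mul n).sub (hN.mul_right q)

namespace Real

lemma exp_mul_eq_cosh_add_sinh_mul (y : ℝ) {p : ℝ} (hp : p = 1 ∨ p = -1) :
    exp (y * p) = cosh y + sinh y * p := by
  rcases hp with rfl | rfl
  · simp [cosh_add_sinh]
  · simp [← cosh_sub_sinh, sub_eq_add_neg]

lemma exp_sum_mul_eq_sum_powerset {ι : Type*} [DecidableEq ι] (S : Finset ι) (d p : ι → ℝ)
    (hp : ∀ i ∈ S, p i = 1 ∨ p i = -1) :
    exp (∑ i ∈ S, d i * p i) =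
      ∑ P ∈ S.powerset, (∏ i ∈ P, sinh (d i)) * (∏ i ∈ S \ P, cosh (d i)) * ∏ i ∈ P, p i := by
  rw [exp_sum, prod_congr rfl fun i hi ↦
    (exp_mul_eq_cosh_add_sinh_mul (d i) (hp i hi)).trans (add_comm _ _), prod_add]
  exact sum_congr rfl fun P _ ↦ by rw [prod_mul_distrib]; ring

end Real

namespace ReflectionPositivity

/-! ### Reflection positivity from a splitting of the energy -/

structure IsReflectionHalf {X : Type*} (ϑ : X → X) (L : Set X) : Prop where
  involutive : Involutive ϑ
  mem_or_mem : ∀ t, t ∈ L ∨ ϑ t ∈ L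
  eq_of_mem_of_mem : ∀ t, t ∈ L → ϑ t ∈ L → ϑ t = t

namespace IsReflectionHalf

variable {X α : Type*} {ϑ : X → X} {L : Set X} (hL : IsReflectionHalf ϑ L)
include hL

lemma mem_of_notMem {t : X} (ht : t ∉ L) : ϑ t ∈ L :=
  (hL.mem_or_mem t).resolve_left ht

lemma apply_ne_self_of_notMem {t : X} (ht : t ∉ L) : ϑ t ≠ t :=
  fun h ↦ ht (h ▸ hL.mem_of_notMem ht)

lemma apply_mem_sdiff_of_notMem {t : X} (ht : t ∉ L) : ϑ t ∈ L \ fixedPoints ϑ :=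
  ⟨hL.mem_of_notMem ht, fun h ↦ hL.apply_ne_self_of_notMem ht (hL.involutive.injective h)⟩

open Classical in
noncomputable def glue (a : ↥(L \ fixedPoints ϑ) → α) (f : ↥(fixedPoints ϑ) → α)
    (a' : ↥(L \ fixedPoints ϑ) → α) (t : X) : α :=
  if h : ϑ t = t then f ⟨t, h⟩
  else if ht : t ∈ L then a ⟨t, ht, h⟩ else a' ⟨ϑ t, hL.apply_mem_sdiff_of_notMem ht⟩

lemma glue_comp (a : ↥(L \ fixedPoints ϑ) → α) (f : ↥(fixedPoints ϑ) → α)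
    (a' : ↥(L \ fixedPoints ϑ) → α) : hL.glue a f a' ∘ ϑ = hL.glue a' f a := by
  funext t
  have hϑ := hL.involutive t
  by_cases hfix : ϑ t = t
  · simp [glue, hfix]
  have hfix' : ϑ (ϑ t) ≠ ϑ t := by rwa [hϑ, ne_comm]
  by_cases ht : t ∈ L
  · have hϑt : ϑ t ∉ L := fun h ↦ hfix (hL.eq_of_mem_of_mem t ht h)
    simp only [glue, comp_apply, dif_neg hfix, dif_neg hfix', dif_pos ht, dif_neg hϑt]
    exact congrArg a' (Subtype.ext hϑ)
  · simp only [glue, comp_apply, dif_neg hfix, dif_neg hfix', dif_neg ht,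
      dif_pos (hL.mem_of_notMem ht)]

lemma glue_eq_of_dependsOn {β : Type*} {G : (X → α) → β} (hG : DependsOn G L)
    (a : ↥(L \ fixedPoints ϑ) → α) (f : ↥(fixedPoints ϑ) → α)
    (a' a'' : ↥(L \ fixedPoints ϑ) → α) : G (hL.glue a f a') = G (hL.glue a f a'') :=
  hG fun t ht ↦ by simp [glue, ht]

noncomputable def splitEquiv : (X → α) ≃
    (↥(L \ fixedPoints ϑ) → α) × (↥(fixedPoints ϑ) → α) × (↥(L \ fixedPoints ϑ) → α) where
  toFun σ := (fun s ↦ σ s, fun s ↦ σ s, fun s ↦ σ (ϑ s))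
  invFun p := hL.glue p.1 p.2.1 p.2.2
  left_inv σ := by
    funext t
    by_cases hfix : ϑ t = t
    · simp [glue, hfix]
    · by_cases ht : t ∈ L <;> simp [glue, hfix, ht, hL.involutive t]
  right_inv := by
    rintro ⟨a, f, a'⟩
    refine Prod.ext (funext fun s ↦ ?_) (Prod.ext (funext fun s ↦ ?_) (funext fun s ↦ ?_))
    · simp only [glue, dif_neg (show ¬ϑ s = s from s.2.2), dif_pos s.2.1]
    · simp only [glue, dif_pos (show ϑ s = s from s.2)]
    · have hs : ϑ s ∉ L := fun h ↦ s.2.2 (hL.eq_of_mem_of_mem s s.2.1 h)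
      have hs' : ϑ (ϑ s) ≠ ϑ s := by rw [hL.involutive]; exact Ne.symm s.2.2
      simp only [glue, dif_neg hs', dif_neg hs]
      exact congrArg a' (Subtype.ext (hL.involutive s))

theorem sum_mul_comp_nonneg [Fintype X] [DecidableEq X] [Fintype α] {G : (X → α) → ℝ}
    (hG : DependsOn G L) : 0 ≤ ∑ σ, G σ * G (σ ∘ ϑ) := by
  classical
  let g (a : ↥(L \ fixedPoints ϑ) → α) (f : ↥(fixedPoints ϑ) → α) : ℝ := G (hL.glue a f a)
  calc 0 ≤ ∑ f, (∑ a, g a f) * ∑ a', g a' f := sum_nonneg fun f _ ↦ mul_self_nonneg _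
    _ = ∑ a, ∑ f, ∑ a', g a f * g a' f := by
      rw [sum_comm]
      exact sum_congr rfl fun f _ ↦ sum_mul_sum ..
    _ = ∑ p, G (hL.splitEquiv.symm p) * G (hL.splitEquiv.symm p ∘ ϑ) := by
      simp only [Fintype.sum_prod_type]
      refine sum_congr rfl fun a _ ↦ sum_congr rfl fun f _ ↦ sum_congr rfl fun a' _ ↦ ?_
      simp only [splitEquiv, Equiv.coe_fn_symm_mk, glue_comp, g]
      rw [hL.glue_eq_of_dependsOn hG a f a' a, hL.glue_eq_of_dependsOn hG a' f a a']
    _ = ∑ σ, G σ * G (σ ∘ ϑ) := hL.splitEquiv.symm.sum_comp fun σ ↦ G σ * G (σ ∘ ϑ)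

theorem sum_mul_comp_mul_sum_nonneg [Fintype X] [DecidableEq X] [Fintype α] {ι : Type*}
    (s : Finset ι) {c : ι → ℝ} {A : ι → (X → α) → ℝ} (hc : ∀ k ∈ s, 0 ≤ c k)
    (hA : ∀ k ∈ s, DependsOn (A k) L) {F : (X → α) → ℝ} (hF : DependsOn F L) :
    0 ≤ ∑ σ, F σ * F (σ ∘ ϑ) * ∑ k ∈ s, c k * (A k σ * A k (σ ∘ ϑ)) := by
  have hswap : ∑ σ, F σ * F (σ ∘ ϑ) * ∑ k ∈ s, c k * (A k σ * A k (σ ∘ ϑ)) =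
      ∑ k ∈ s, c k * ∑ σ, (F σ * A k σ) * (F (σ ∘ ϑ) * A k (σ ∘ ϑ)) := by
    simp only [mul_sum]
    rw [sum_comm]
    exact sum_congr rfl fun k _ ↦ sum_congr rfl fun σ _ ↦ by ring
  rw [hswap]
  exact sum_nonneg fun k hk ↦ mul_nonneg (hc k hk) (hL.sum_mul_comp_nonneg (hF.mul (hA k hk)))

end IsReflectionHalf

lemma sum_mul_comp_mul_comm {X α : Type*} [Fintype X] [DecidableEq X] [Fintype α] {ϑ : X → X}
    (hϑ : Involutive ϑ) {W : (X → α) → ℝ} (hW : ∀ σ, W (σ ∘ ϑ) = W σ) (f g : (X → α) → ℝ) :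
    ∑ σ, f σ * g (σ ∘ ϑ) * W σ = ∑ σ, g σ * f (σ ∘ ϑ) * W σ := by
  have hinv : Involutive fun σ : X → α ↦ σ ∘ ϑ := fun σ ↦ by
    simp only [comp_assoc, hϑ.comp_self, comp_id]
  refine Fintype.sum_equiv (hinv.toPerm _) _ _ fun σ ↦ ?_
  simp only [Involutive.coe_toPerm, hinv σ, hW]
  ring

section HalfWeight

variable {X : Type*} {ϑ : X → X} {L : Set X}

open Classical in
noncomputable def halfWeight (ϑ : X → X) (L : Set X) (t : X) : ℝ :=
  if ϑ t = t then 1 / 2 else if t ∈ L then 1 else 0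

lemma halfWeight_nonneg (t : X) : 0 ≤ halfWeight ϑ L t := by
  unfold halfWeight; split_ifs <;> norm_num

lemma IsReflectionHalf.mem_of_halfWeight_ne_zero (hL : IsReflectionHalf ϑ L) {t : X}
    (ht : halfWeight ϑ L t ≠ 0) : t ∈ L := by
  by_contra hLt
  exact ht (by simp [halfWeight, hL.apply_ne_self_of_notMem hLt, hLt])

lemma IsReflectionHalf.halfWeight_add_halfWeight (hL : IsReflectionHalf ϑ L) (t : X) :
    halfWeight ϑ L t + halfWeight ϑ L (ϑ t) = 1 := by
  by_cases hfix : ϑ t = t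
  · simp only [halfWeight, hfix, if_true]; norm_num
  have hfix' : ϑ (ϑ t) ≠ ϑ t := by rwa [hL.involutive t, ne_comm]
  by_cases ht : t ∈ L
  · have hϑt : ϑ t ∉ L := fun h ↦ hfix (hL.eq_of_mem_of_mem t ht h)
    simp [halfWeight, hfix, hfix', ht, hϑt]
  · simp [halfWeight, hfix, hfix', ht, hL.mem_of_notMem ht]

end HalfWeight

def ReflectionSplitting {X α : Type*} [Fintype X] (φ : α → ℝ) (ϑ : X → X) (L : Set X)
    (E : (X → α) → ℝ) : Prop :=
  ∃ (K : (X → α) → ℝ) (d : X → ℝ), DependsOn K L ∧ 0 ≤ d ∧ support d ⊆ L ∧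
    ∀ σ, E σ = K σ + K (σ ∘ ϑ) + ∑ t, d t * (φ (σ t) * φ (σ (ϑ t)))

namespace ReflectionSplitting

variable {X α : Type*} [Fintype X] {φ : α → ℝ} {ϑ : X → X} {L : Set X} {E E' : (X → α) → ℝ}

lemma add (hE : ReflectionSplitting φ ϑ L E) (hE' : ReflectionSplitting φ ϑ L E') :
    ReflectionSplitting φ ϑ L (fun σ ↦ E σ + E' σ) := by
  obtain ⟨K, d, hK, hd, hdL, hE⟩ := hE
  obtain ⟨K', d', hK', hd', hdL', hE'⟩ := hE'
  refine ⟨fun σ ↦ K σ + K' σ, d + d', hK.add hK', add_nonneg hd hd',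
    (support_add d d').trans (Set.union_subset hdL hdL'), fun σ ↦ ?_⟩
  simp only [hE, hE', Pi.add_apply, add_mul, sum_add_distrib]
  ring

lemma const_mul {c : ℝ} (hc : 0 ≤ c) (hE : ReflectionSplitting φ ϑ L E) :
    ReflectionSplitting φ ϑ L (fun σ ↦ c * E σ) := by
  obtain ⟨K, d, hK, hd, hdL, hE⟩ := hE
  refine ⟨fun σ ↦ c * K σ, c • d, hK.const_mul c, smul_nonneg hc hd,
    (support_const_smul_subset c d).trans hdL, fun σ ↦ ?_⟩
  simp only [hE, Pi.smul_apply, smul_eq_mul, mul_add, mul_sum, mul_assoc]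

lemma of_eq_add_comp {K : (X → α) → ℝ} (hK : DependsOn K L) :
    ReflectionSplitting φ ϑ L (fun σ ↦ K σ + K (σ ∘ ϑ)) :=
  ⟨K, 0, hK, le_rfl, by simp, fun σ ↦ by simp⟩

lemma comp_equiv {Y : Type*} [Fintype Y] {ϑ : Y → Y} {L : Set Y} {E : (Y → α) → ℝ}
    (hE : ReflectionSplitting φ ϑ L E) (e : X ≃ Y) :
    ReflectionSplitting φ (e.symm ∘ ϑ ∘ e) (e ⁻¹' L) (fun σ ↦ E (σ ∘ e.symm)) := by
  obtain ⟨K, d, hK, hd, hdL, hE⟩ := hE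
  refine ⟨fun σ ↦ K (σ ∘ e.symm), d ∘ e, fun σ σ' h ↦ hK fun y hy ↦ h _ (by simpa using hy),
    fun t ↦ hd (e t), fun t ht ↦ hdL ht, fun σ ↦ ?_⟩
  have hcomp : (σ ∘ e.symm ∘ ϑ ∘ e) ∘ e.symm = (σ ∘ e.symm) ∘ ϑ := by
    ext y; simp
  dsimp only
  rw [hE, hcomp]
  congr 1
  exact (Fintype.sum_equiv e _ _ fun t ↦ by simp).symm

lemma apply_comp_eq (hE : ReflectionSplitting φ ϑ L E) (hϑ : Involutive ϑ) (σ : X → α) :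
    E (σ ∘ ϑ) = E σ := by
  obtain ⟨K, d, -, -, -, hE⟩ := hE
  rw [hE, hE, comp_assoc, hϑ.comp_self, comp_id, add_comm (K (σ ∘ ϑ))]
  congr 1
  exact sum_congr rfl fun t _ ↦ by simp only [comp_apply, hϑ t, mul_comm (φ (σ t))]

open Real

variable [DecidableEq X] [Fintype α]

theorem sum_mul_comp_mul_exp_comm (hE : ReflectionSplitting φ ϑ L E) (hϑ : Involutive ϑ)
    (f g : (X → α) → ℝ) :
    ∑ σ, f σ * g (σ ∘ ϑ) * exp (E σ) = ∑ σ, g σ * f (σ ∘ ϑ) * exp (E σ) :=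
  sum_mul_comp_mul_comm hϑ (fun σ ↦ congrArg exp (hE.apply_comp_eq hϑ σ)) f g

theorem sum_mul_comp_mul_exp_nonneg (hE : ReflectionSplitting φ ϑ L E)
    (hL : IsReflectionHalf ϑ L) (hφ : ∀ a, φ a = 1 ∨ φ a = -1) {F : (X → α) → ℝ}
    (hF : DependsOn F L) : 0 ≤ ∑ σ, F σ * F (σ ∘ ϑ) * exp (E σ) := by
  classical
  obtain ⟨K, d, hK, hd, hdL, hE⟩ := hE
  set S := univ.filter fun t ↦ d t ≠ 0
  have hexp (σ : X → α) : exp (E σ) = ∑ P ∈ S.powerset,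
      (∏ t ∈ P, sinh (d t)) * (∏ t ∈ S \ P, cosh (d t)) *
        ((exp (K σ) * ∏ t ∈ P, φ (σ t)) * (exp (K (σ ∘ ϑ)) * ∏ t ∈ P, φ ((σ ∘ ϑ) t))) := by
    have hsign (t : X) : φ (σ t) * φ (σ (ϑ t)) = 1 ∨ φ (σ t) * φ (σ (ϑ t)) = -1 := by
      rcases hφ (σ t) with h | h <;> rcases hφ (σ (ϑ t)) with h' | h' <;> simp [h, h']
    rw [hE, exp_add, exp_add, ← sum_filter_of_ne fun t _ h ↦ left_ne_zero_of_mul h,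
      exp_sum_mul_eq_sum_powerset _ _ _ fun t _ ↦ hsign t, mul_sum]
    exact sum_congr rfl fun P _ ↦ by rw [prod_mul_distrib]; simp only [comp_apply]; ring
  simp only [hexp]
  refine hL.sum_mul_comp_mul_sum_nonneg _ (fun P _ ↦ ?_) (fun P hP ↦ ?_) hF
  · exact mul_nonneg (prod_nonneg fun t _ ↦ sinh_nonneg_iff.2 (hd t))
      (prod_nonneg fun t _ ↦ (cosh_pos _).le)
  · refine DependsOn.mul (fun _ _ h ↦ congrArg exp (hK h)) (DependsOn.finset_prod fun t ht ↦ ?_)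
    have htL : t ∈ L := hdL (mem_filter.1 (mem_powerset.1 hP ht)).2
    exact fun _ _ h ↦ congrArg φ (h t htL)

end ReflectionSplitting

lemma IsReflectionHalf.comp_equiv {X Y : Type*} {ϑ : Y → Y} {L : Set Y}
    (hL : IsReflectionHalf ϑ L) (e : X ≃ Y) : IsReflectionHalf (e.symm ∘ ϑ ∘ e) (e ⁻¹' L) where
  involutive t := by simp [hL.involutive (e t)]
  mem_or_mem t := by simpa using hL.mem_or_mem (e t)
  eq_of_mem_of_mem t h h' := by
    simp only [comp_apply, Set.mem_preimage, Equiv.apply_symm_apply] at h' ⊢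
    rw [hL.eq_of_mem_of_mem _ h h', e.symm_apply_apply]

namespace IsReflectionHalf

variable {X α : Type*} [Fintype X] {φ : α → ℝ} {ϑ : X → X} {L : Set X}
  (hL : IsReflectionHalf ϑ L)
include hL

theorem reflectionSplitting_sum {F : X → (X → α) → ℝ} (hF : ∀ t ∈ L, DependsOn (F t) L)
    (hFϑ : ∀ t σ, F (ϑ t) σ = F t (σ ∘ ϑ)) :
    ReflectionSplitting φ ϑ L (fun σ ↦ ∑ t, F t σ) := by
  have hK : DependsOn (fun σ ↦ ∑ t, halfWeight ϑ L t * F t σ) L := by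
    refine DependsOn.finset_sum fun t _ ↦ ?_
    by_cases ht : halfWeight ϑ L t = 0
    · exact fun _ _ _ ↦ by simp only [ht, zero_mul]
    · exact (hF t (hL.mem_of_halfWeight_ne_zero ht)).const_mul _
  convert ReflectionSplitting.of_eq_add_comp (φ := φ) (ϑ := ϑ) hK using 2 with σ
  calc ∑ t, F t σ = ∑ t, (halfWeight ϑ L t + halfWeight ϑ L (ϑ t)) * F t σ := by
        simp only [hL.halfWeight_add_halfWeight, one_mul]
    _ = ∑ t, halfWeight ϑ L t * F t σ + ∑ t, halfWeight ϑ L t * F t (σ ∘ ϑ) := by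
        simp only [add_mul, sum_add_distrib, hL.involutive.sum_mul_comp (halfWeight ϑ L), hFϑ]

theorem reflectionSplitting_sum_reflectedPairs {χ : X → ℝ} (hχ : 0 ≤ χ) :
    ReflectionSplitting φ ϑ L (fun σ ↦ ∑ t, χ t * (φ (σ t) * φ (σ (ϑ t)))) := by
  refine ⟨0, fun t ↦ halfWeight ϑ L t * (χ t + χ (ϑ t)), fun _ _ _ ↦ rfl,
    fun t ↦ mul_nonneg (halfWeight_nonneg t) (add_nonneg (hχ _) (hχ _)),
    fun t ht ↦ hL.mem_of_halfWeight_ne_zero (left_ne_zero_of_mul ht), fun σ ↦ ?_⟩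
  set P : X → ℝ := fun t ↦ φ (σ t) * φ (σ (ϑ t))
  have hP : ∀ t, P (ϑ t) = P t := fun t ↦ by simp only [P, hL.involutive t, mul_comm]
  calc ∑ t, χ t * P t = ∑ t, (halfWeight ϑ L t + halfWeight ϑ L (ϑ t)) * (χ t * P t) := by
        simp only [hL.halfWeight_add_halfWeight, one_mul]
    _ = ∑ t, halfWeight ϑ L t * (χ t * P t) +
          ∑ t, halfWeight ϑ L t * (χ (ϑ t) * P (ϑ t)) := by
        rw [← hL.involutive.sum_mul_comp _ fun t ↦ χ t * P t, ← sum_add_distrib]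
        simp only [add_mul]
    _ = 0 + 0 + ∑ t, halfWeight ϑ L t * (χ t + χ (ϑ t)) * P t := by
        rw [← sum_add_distrib]
        simp only [hP, zero_add]
        exact sum_congr rfl fun t _ ↦ by ring

/-- The mirror image of the bond `(t, ν t)` is the bond `(ϑ (ν t), ϑ t)`. The weight `u` assigns
bonds to the left half; a bond that is not fully assigned together with its mirror image
crosses the mirror. -/
theorem reflectionSplitting_sum_bonds {ν : X → X} (hν : Involutive (ϑ ∘ ν)) {u : X → ℝ}
    (hu : ∀ t, u t ≠ 0 → t ∈ L ∧ ν t ∈ L) (hu_le : ∀ t, u t + u (ϑ (ν t)) ≤ 1)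
    (hu_eq : ∀ t, u t + u (ϑ (ν t)) ≠ 1 → ν t = ϑ t) :
    ReflectionSplitting φ ϑ L (fun σ ↦ ∑ t, φ (σ t) * φ (σ (ν t))) := by
  set χ : X → ℝ := fun t ↦ 1 - u t - u (ϑ (ν t))
  have hχ : 0 ≤ χ := fun t ↦ by simp only [χ, Pi.zero_apply]; linarith [hu_le t]
  have hK : DependsOn (fun σ ↦ ∑ t, u t * (φ (σ t) * φ (σ (ν t)))) L := by
    refine DependsOn.finset_sum fun t _ ↦ ?_
    by_cases ht : u t = 0
    · exact fun _ _ _ ↦ by simp only [ht, zero_mul]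
    · exact fun σ σ' h ↦ by simp only [h t (hu t ht).1, h (ν t) (hu t ht).2]
  have hνϑν (t : X) : ν (ϑ (ν t)) = ϑ t := by
    rw [← hL.involutive (ν (ϑ (ν t)))]
    exact congrArg ϑ (hν t)
  have hmirror (σ : X → α) := hν.sum_mul_comp u fun t ↦ φ (σ t) * φ (σ (ν t))
  simp only [comp_apply] at hmirror
  convert (ReflectionSplitting.of_eq_add_comp (φ := φ) (ϑ := ϑ) hK).add
    (hL.reflectionSplitting_sum_reflectedPairs hχ) using 2 with σ
  calc ∑ t, φ (σ t) * φ (σ (ν t))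
      = ∑ t, (u t + u (ϑ (ν t)) + χ t) * (φ (σ t) * φ (σ (ν t))) := by simp [χ]
    _ = _ := by
        simp only [add_mul, sum_add_distrib, hmirror]
        congr 1
        · congr 1
          exact sum_congr rfl fun t _ ↦ by simp [hνϑν, mul_comm]
        · refine sum_congr rfl fun t _ ↦ ?_
          by_cases ht : χ t = 0
          · simp [ht]
          · rw [hu_eq t fun h ↦ ht (by simp [χ, ← h])]

end IsReflectionHalf

/-! ### Mirror geometry on `ZMod a` -/

section Mirror

variable {a : ℕ} [NeZero a] (c : ℤ)

/-- `2x - c` reduced to `[0, 2a)`: twice the offset of `x` from the mirror point `c / 2`. -/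
def mirrorOffset (a : ℕ) (c : ℤ) (x : ZMod a) : ℤ := (2 * (x.val : ℤ) - c) % (2 * a)

local notation "m" => mirrorOffset a c

omit c in
lemma two_mul_natCast_pos : 0 < 2 * (a : ℤ) := by
  have := NeZero.pos a; omega

lemma mirrorOffset_nonneg (x : ZMod a) : 0 ≤ m x :=
  Int.emod_nonneg _ two_mul_natCast_pos.ne'

lemma mirrorOffset_lt (x : ZMod a) : m x < 2 * a :=
  Int.emod_lt_of_pos _ two_mul_natCast_pos

theorem add_eq_iff_dvd_mirrorOffset (x y : ZMod a) (k : ℤ) :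
    x + y = ((c + k : ℤ) : ZMod a) ↔ 2 * (a : ℤ) ∣ m x + m y - 2 * k := by
  have hcast : x + y - ((c + k : ℤ) : ZMod a) = ((x.val + y.val - c - k : ℤ) : ZMod a) := by
    push_cast [ZMod.natCast_zmod_val]; ring
  have hsum : m x + m y - 2 * k = 2 * (x.val + y.val - c - k : ℤ) -
      2 * a * ((2 * x.val - c) / (2 * a) + (2 * y.val - c) / (2 * a)) := by
    simp only [mirrorOffset, Int.emod_def]; ring
  rw [← sub_eq_zero, hcast, ZMod.intCast_zmod_eq_zero_iff_dvd, hsum,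
    dvd_sub_left (dvd_mul_right _ _), mul_dvd_mul_iff_left two_ne_zero]

lemma mirrorOffset_add_mirrorOffset_sub (x : ZMod a) :
    m x + m ((c : ZMod a) - x) = 0 ∨ m x + m ((c : ZMod a) - x) = 2 * a := by
  have h := (add_eq_iff_dvd_mirrorOffset c x ((c : ZMod a) - x) 0).1 (by simp)
  have := mirrorOffset_nonneg c x
  have := mirrorOffset_nonneg c ((c : ZMod a) - x)
  have := mirrorOffset_lt c x
  have := mirrorOffset_lt c ((c : ZMod a) - x)
  have := Int.eq_zero_or_eq_or_eq_two_mul_of_dvd two_mul_natCast_pos h (by omega) (by omega)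
  omega

lemma mirrorOffset_add_mirrorOffset_sub_add_one (x : ZMod a) :
    m x + m ((c : ZMod a) - (x + 1)) = 2 * a - 2 ∨
      m x + m ((c : ZMod a) - (x + 1)) = 4 * a - 2 := by
  have h := (add_eq_iff_dvd_mirrorOffset c x ((c : ZMod a) - (x + 1)) (-1)).1
    (by push_cast; ring)
  have := mirrorOffset_nonneg c x
  have := mirrorOffset_nonneg c ((c : ZMod a) - (x + 1))
  have := mirrorOffset_lt c x
  have := mirrorOffset_lt c ((c : ZMod a) - (x + 1))
  have := Int.eq_zero_or_eq_or_eq_two_mul_of_dvd two_mul_natCast_pos h (by omega) (by omega)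
  omega

lemma sub_eq_self_of_mirrorOffset (x : ZMod a) (h : m x = 0 ∨ m x = a) :
    (c : ZMod a) - x = x := by
  have hxx : x + x = ((c + 0 : ℤ) : ZMod a) := (add_eq_iff_dvd_mirrorOffset c x x 0).2 <| by
    rcases h with h | h
    · exact ⟨0, by omega⟩
    · exact ⟨1, by omega⟩
  rw [sub_eq_iff_eq_add, hxx, add_zero]

lemma add_one_eq_sub_of_mirrorOffset (x : ZMod a) (h : m x = a - 1 ∨ m x = 2 * a - 1) :
    x + 1 = (c : ZMod a) - x := by
  have hxx : x + x = ((c + -1 : ℤ) : ZMod a) := (add_eq_iff_dvd_mirrorOffset c x x (-1)).2 <| by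
    rcases h with h | h
    · exact ⟨1, by omega⟩
    · exact ⟨2, by omega⟩
  rw [eq_sub_iff_add_eq, add_right_comm, hxx]
  push_cast; ring

noncomputable def leftBondWeight (a : ℕ) (c : ℤ) (x : ZMod a) : ℝ :=
  if mirrorOffset a c x + 2 ≤ a then 1 else 0

lemma mirrorOffset_le_of_leftBondWeight_ne_zero (x : ZMod a) (h : leftBondWeight a c x ≠ 0) :
    m x ≤ a ∧ m (x + 1) ≤ a := by
  have hx : m x + 2 ≤ a := by by_contra hx; simp [leftBondWeight, hx] at h
  have := mirrorOffset_add_mirrorOffset_sub c (x + 1)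
  have := mirrorOffset_add_mirrorOffset_sub_add_one c x
  have := mirrorOffset_nonneg c (x + 1)
  have := mirrorOffset_nonneg c ((c : ZMod a) - (x + 1))
  constructor <;> omega

lemma leftBondWeight_add_le_one (x : ZMod a) :
    leftBondWeight a c x + leftBondWeight a c ((c : ZMod a) - (x + 1)) ≤ 1 := by
  have := mirrorOffset_add_mirrorOffset_sub_add_one c x
  unfold leftBondWeight
  split_ifs <;> norm_num
  omega

lemma add_one_eq_of_leftBondWeight_add_ne_one (x : ZMod a)
    (h : leftBondWeight a c x + leftBondWeight a c ((c : ZMod a) - (x + 1)) ≠ 1) :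
    x + 1 = (c : ZMod a) - x := by
  have := mirrorOffset_add_mirrorOffset_sub_add_one c x
  have := mirrorOffset_lt c x
  have := mirrorOffset_lt c ((c : ZMod a) - (x + 1))
  unfold leftBondWeight at h
  split_ifs at h <;> norm_num at h
  · omega
  · exact add_one_eq_sub_of_mirrorOffset c x (by omega)

end Mirror

/-! ### The torus Ising model with cell-board field -/

section Torus

noncomputable def spinSign (s : Bool) : ℝ := if s then 1 else -1

lemma spinSign_eq_one_or_eq_neg_one (s : Bool) : spinSign s = 1 ∨ spinSign s = -1 := by
  cases s <;> simp [spinSign]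

variable {a b : ℕ} [NeZero a]

def fstReflection (a b : ℕ) (c : ℤ) (t : ZMod a × ZMod b) : ZMod a × ZMod b :=
  ((c : ZMod a) - t.1, t.2)

def fstHalf (a b : ℕ) (c : ℤ) : Set (ZMod a × ZMod b) := {t | mirrorOffset a c t.1 ≤ a}

lemma isReflectionHalf_fstHalf (c : ℤ) :
    IsReflectionHalf (fstReflection a b c) (fstHalf a b c) where
  involutive t := by simp [fstReflection]
  mem_or_mem t := by
    have := mirrorOffset_add_mirrorOffset_sub c t.1
    have := mirrorOffset_nonneg c t.1
    have := mirrorOffset_nonneg c ((c : ZMod a) - t.1)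
    simp only [fstHalf, fstReflection, Set.mem_ofPred_eq]
    omega
  eq_of_mem_of_mem t h h' := by
    have := mirrorOffset_add_mirrorOffset_sub c t.1
    have := mirrorOffset_nonneg c t.1
    have := mirrorOffset_nonneg c ((c : ZMod a) - t.1)
    simp only [fstHalf, fstReflection, Set.mem_ofPred_eq] at h h'
    exact Prod.ext (sub_eq_self_of_mirrorOffset c t.1 (by omega)) rfl

theorem reflectionSplitting_ham_fst [NeZero b] (c : ℤ) {J β : ℝ} (hJ : 0 ≤ J) (hβ : 0 ≤ β)
    {hf : ZMod a × ZMod b → ℝ} (hsymm : ∀ t, hf (fstReflection a b c t) = hf t) :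
    ReflectionSplitting spinSign (fstReflection a b c) (fstHalf a b c)
      (fun σ ↦ -β * ham J hf σ) := by
  have hL := isReflectionHalf_fstHalf (a := a) (b := b) c
  have hhor : ReflectionSplitting spinSign (fstReflection a b c) (fstHalf a b c)
      fun σ ↦ ∑ t, spinSign (σ t) * spinSign (σ (t + (1, 0))) :=
    hL.reflectionSplitting_sum_bonds (u := fun t ↦ leftBondWeight a c t.1)
      (fun t ↦ Prod.ext (by simp [fstReflection]; ring) (by simp [fstReflection]))
      (fun t ht ↦ by simpa [fstHalf] using mirrorOffset_le_of_leftBondWeight_ne_zero c t.1 ht)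
      (fun t ↦ leftBondWeight_add_le_one c t.1)
      (fun t ht ↦ Prod.ext (add_one_eq_of_leftBondWeight_add_ne_one c t.1 ht) (add_zero _))
  have hver : ReflectionSplitting spinSign (fstReflection a b c) (fstHalf a b c)
      fun σ ↦ ∑ t, spinSign (σ t) * spinSign (σ (t + (0, 1))) :=
    hL.reflectionSplitting_sum
      (fun t ht σ σ' h ↦ by rw [h t ht, h (t + (0, 1)) (by simpa [fstHalf] using ht)])
      (fun t σ ↦ by simp [fstReflection])
  have hfld : ReflectionSplitting spinSign (fstReflection a b c) (fstHalf a b c)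
      fun σ ↦ ∑ t, hf t * spinSign (σ t) :=
    hL.reflectionSplitting_sum (fun t ht σ σ' h ↦ by rw [h t ht]) (fun t σ ↦ by simp [hsymm])
  have hham : (fun σ ↦ -β * ham J hf σ) = fun σ ↦
      β * J * (∑ t, spinSign (σ t) * spinSign (σ (t + (1, 0))) +
        ∑ t, spinSign (σ t) * spinSign (σ (t + (0, 1)))) + β * ∑ t, hf t * spinSign (σ t) := by
    funext σ
    simp only [ham, spin, spinSign, sum_add_distrib]
    ring
  rw [hham]
  exact ((hhor.add hver).const_mul (mul_nonneg hβ hJ)).add (hfld.const_mul hβ)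

end Torus

section CellBoard

lemma reflMap_zero (L1 L2 N : ℕ) (n : ℤ) :
    reflMap L1 L2 N 0 n = fstReflection (N * L1) (N * L2) (2 * n * L1 + L1 - 1) := rfl

lemma leftHalf_zero (L1 L2 N : ℕ) (n : ℤ) :
    leftHalf L1 L2 N 0 n = fstHalf (N * L1) (N * L2) (2 * n * L1 + L1 - 1) := by
  ext t
  simp [leftHalf, fstHalf, mirrorOffset]

lemma reflMap_one (L1 L2 N : ℕ) (n : ℤ) :
    reflMap L1 L2 N 1 n =
      (Equiv.prodComm _ _).symm ∘ reflMap L2 L1 N 0 n ∘ Equiv.prodComm _ _ := rfl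

lemma leftHalf_one (L1 L2 N : ℕ) (n : ℤ) :
    leftHalf L1 L2 N 1 n = Equiv.prodComm _ _ ⁻¹' leftHalf L2 L1 N 0 n := rfl

lemma cellField_fstReflection {L1 L2 N : ℕ} (hL1 : 0 < L1) (hN : Even N) [NeZero (N * L1)]
    (h : ℝ) (n : ℤ) (t : ZMod (N * L1) × ZMod (N * L2)) :
    cellField L1 L2 h (fstReflection (N * L1) (N * L2) (2 * n * L1 + L1 - 1) t) =
      cellField L1 L2 h t := by
  set w := (((2 * n * L1 + L1 - 1 : ℤ) : ZMod (N * L1)) - t.1).val with hw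
  have hval : (w : ℤ) = (2 * n * L1 + L1 - 1 - t.1.val) % (N * L1) := by
    rw [hw, show ((2 * n * L1 + L1 - 1 : ℤ) : ZMod (N * L1)) - t.1 =
      ((2 * n * L1 + L1 - 1 - t.1.val : ℤ) : ZMod (N * L1)) by simp, ZMod.val_intCast]
    push_cast; rfl
  have hpar : Even (w / L1 + t.1.val / L1) := by
    rw [← Int.even_coe_nat]
    push_cast [Int.natCast_ediv]
    rw [hval]
    exact Int.even_emod_div_add_div (by exact_mod_cast hL1) ((Int.even_coe_nat N).2 hN) n _
  rw [Nat.even_add] at hpar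
  simp only [cellField, fstReflection, Nat.even_add, ← hw, hpar]

lemma cellField_swap {a b : ℕ} (L1 L2 : ℕ) (h : ℝ) (u : ZMod b × ZMod a) :
    cellField L1 L2 h u.swap = cellField L2 L1 h u := by
  simp [cellField, add_comm]

lemma ham_comp_swap {a b : ℕ} [NeZero a] [NeZero b] (J : ℝ) (hf : ZMod a × ZMod b → ℝ)
    (σ : ZMod a × ZMod b → Bool) : ham J (hf ∘ Prod.swap) (σ ∘ Prod.swap) = ham J hf σ := by
  simp only [ham]
  congr 1
  · congr 1
    refine Fintype.sum_equiv (Equiv.prodComm _ _) _ _ fun u ↦ ?_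
    change spin σ u.swap * spin σ (u.swap + (0, 1)) + spin σ u.swap * spin σ (u.swap + (1, 0)) = _
    simp only [Equiv.prodComm_apply]
    ring
  · exact Fintype.sum_equiv (Equiv.prodComm _ _) _ _ fun u ↦ rfl

theorem isReflectionHalf_leftHalf (L1 L2 N : ℕ) [NeZero (N * L1)] [NeZero (N * L2)] (i : Fin 2)
    (n : ℤ) : IsReflectionHalf (reflMap L1 L2 N i n) (leftHalf L1 L2 N i n) := by
  obtain rfl | rfl : i = 0 ∨ i = 1 := by omega
  · rw [reflMap_zero, leftHalf_zero]
    exact isReflectionHalf_fstHalf _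
  · rw [reflMap_one, leftHalf_one, reflMap_zero, leftHalf_zero]
    exact (isReflectionHalf_fstHalf _).comp_equiv _

theorem reflectionSplitting_ham_cellField {L1 L2 N : ℕ} (hL1 : 0 < L1) (hL2 : 0 < L2)
    (hN : Even N) [NeZero (N * L1)] [NeZero (N * L2)] {J β : ℝ} (hJ : 0 ≤ J) (hβ : 0 ≤ β)
    (h : ℝ) (i : Fin 2) (n : ℤ) :
    ReflectionSplitting spinSign (reflMap L1 L2 N i n) (leftHalf L1 L2 N i n)
      (fun σ ↦ -β * ham J (cellField L1 L2 h) σ) := by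
  obtain rfl | rfl : i = 0 ∨ i = 1 := by omega
  · rw [reflMap_zero, leftHalf_zero]
    exact reflectionSplitting_ham_fst _ hJ hβ (cellField_fstReflection hL1 hN h n)
  · rw [reflMap_one, leftHalf_one, reflMap_zero, leftHalf_zero]
    have hswap : (fun σ ↦ -β * ham J (cellField L1 L2 h) σ) = fun σ ↦ -β *
        ham J (cellField L2 L1 h) (σ ∘ (Equiv.prodComm (ZMod (N * L1)) (ZMod (N * L2))).symm) := by
      funext σ
      rw [Equiv.prodComm_symm, Equiv.coe_prodComm, ← funext (cellField_swap L1 L2 h),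
        ← comp_def, ham_comp_swap]
    rw [hswap]
    exact (reflectionSplitting_ham_fst _ hJ hβ (cellField_fstReflection hL2 hN h n)).comp_equiv _

end CellBoard

end ReflectionPositivity

open ReflectionPositivity

theorem reflection_positivity_general (L1 L2 N : ℕ) (hL1 : 0 < L1) (hL2 : 0 < L2)
    (hNeven : Even N) [NeZero (N * L1)] [NeZero (N * L2)]
    (J h β : ℝ) (hJ : 0 < J) (hβ : 0 ≤ β) (i : Fin 2) (n : ℤ)
    (f g : (ZMod (N * L1) × ZMod (N * L2) → Bool) → ℝ)
    (hf : ∀ σ σ', (∀ t ∈ leftHalf L1 L2 N i n, σ t = σ' t) → f σ = f σ') :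
    (∑ σ : ZMod (N * L1) × ZMod (N * L2) → Bool,
        f σ * g (σ ∘ reflMap L1 L2 N i n) * Real.exp (-β * ham J (cellField L1 L2 h) σ)
      = ∑ σ : ZMod (N * L1) × ZMod (N * L2) → Bool,
        g σ * f (σ ∘ reflMap L1 L2 N i n) * Real.exp (-β * ham J (cellField L1 L2 h) σ)) ∧
    0 ≤ ∑ σ : ZMod (N * L1) × ZMod (N * L2) → Bool,
        f σ * f (σ ∘ reflMap L1 L2 N i n) * Real.exp (-β * ham J (cellField L1 L2 h) σ) := by
  have hhalf := isReflectionHalf_leftHalf L1 L2 N i n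
  have hsplit := reflectionSplitting_ham_cellField hL1 hL2 hNeven hJ.le hβ h i n
  exact ⟨hsplit.sum_mul_comp_mul_exp_comm hhalf.involutive f g,
    hsplit.sum_mul_comp_mul_exp_nonneg hhalf spinSign_eq_one_or_eq_neg_one fun σ σ' ↦ hf σ σ'⟩

/-- Reflection positivity of the torus Gibbs measure: for all functions
`f, g` on configuration space depending only on the restriction to the left half `𝕋ˡ`,
(i) `Σ_σ f(σ)·g(σ∘ϑ)·e^{−βH_N(σ)} = Σ_σ g(σ)·f(σ∘ϑ)·e^{−βH_N(σ)}` and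
(ii) `Σ_σ f(σ)·f(σ∘ϑ)·e^{−βH_N(σ)} ≥ 0`. -/
theorem reflection_positivity (L1 L2 N : ℕ) (hL1 : 0 < L1) (hL2 : 0 < L2)
    (hN : 2 ≤ N) (hNeven : Even N) [NeZero (N * L1)] [NeZero (N * L2)]
    (J h β : ℝ) (hJ : 0 < J) (hh : 0 < h) (hβ : 0 ≤ β) (i : Fin 2) (n : ℤ)
    (f g : (ZMod (N * L1) × ZMod (N * L2) → Bool) → ℝ)
    (hf : ∀ σ σ', (∀ t ∈ leftHalf L1 L2 N i n, σ t = σ' t) → f σ = f σ')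
    (hg : ∀ σ σ', (∀ t ∈ leftHalf L1 L2 N i n, σ t = σ' t) → g σ = g σ') :
    (∑ σ : ZMod (N * L1) × ZMod (N * L2) → Bool,
        f σ * g (σ ∘ reflMap L1 L2 N i n) * Real.exp (-β * ham J (cellField L1 L2 h) σ)
      = ∑ σ : ZMod (N * L1) × ZMod (N * L2) → Bool,
        g σ * f (σ ∘ reflMap L1 L2 N i n) * Real.exp (-β * ham J (cellField L1 L2 h) σ)) ∧
    0 ≤ ∑ σ : ZMod (N * L1) × ZMod (N * L2) → Bool,
        f σ * f (σ ∘ reflMap L1 L2 N i n) * Real.exp (-β * ham J (cellField L1 L2 h) σ) :=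
  reflection_positivity_general L1 L2 N hL1 hL2 hNeven J h β hJ hβ i n f g hf
end

section
/- (Peierls bound on the fundamental torus.) Let L₁, L₂ be positive integers, J > 0, h > 0, and suppose h < 2J/L₁ + 2J/L₂. Then every non-constant configuration σ ∈ {−1,+1}^{𝕋^{[2×2]}} on the torus 𝕋^{[2×2]} = (ℤ/2L₁ℤ) × (ℤ/2L₂ℤ) satisfies H_{[2×2]}(σ) − H_{[2×2]}(σ⁺) ≥ 4·(2J − h·L₁L₂/(L₁+L₂)), where σ⁺ ≡ +1. -/
/-!
With `B₁`, `B₂` the numbers of unsatisfied bonds in the two lattice directions,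
`H(σ) − H(σ⁺) = 2J(B₁ + B₂) + h·S` where `S = Σₜ ε(t)(1 − σ(t))`. In direction `i`
the block sign `ε` is the forward difference of a tent function bounded by `Lᵢ/2`, so
summation by parts gives `|S| ≤ L₁B₁` and `|S| ≤ L₂B₂`, and a convex combination of the two
gives `S ≥ −L₁L₂/(L₁+L₂)·(B₁ + B₂)`. Finally `B₁ + B₂ ≥ 4` when `σ` is not constant: each
`Bᵢ` is even, and if `B₁ = 0` then `σ` is constant along rows, so each of the `2L₁ ≥ 2`
columns carries at least two unsatisfied bonds.
-/

open Finset

noncomputable def blockSign (L : ℕ) {n : ℕ} (x : ZMod n) : ℝ :=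
  if Even (x.val / L) then 1 else -1

theorem abs_blockSign (L : ℕ) {n : ℕ} (x : ZMod n) : |blockSign L x| = 1 := by
  unfold blockSign; split <;> simp

theorem cellField_eq_mul_blockSign (L1 L2 : ℕ) (h : ℝ) {a b : ℕ} (t : ZMod a × ZMod b) :
    cellField L1 L2 h t = h * (blockSign L1 t.1 * blockSign L2 t.2) := by
  unfold cellField blockSign
  by_cases h1 : Even (t.1.val / L1) <;> by_cases h2 : Even (t.2.val / L2) <;>
    simp [h1, h2, Nat.even_add]

noncomputable def tent (L : ℕ) {n : ℕ} (x : ZMod n) : ℝ :=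
  L / 2 - |(x.val : ℝ) - L|

theorem abs_tent_le (L : ℕ) [NeZero (2 * L)] (x : ZMod (2 * L)) : |tent L x| ≤ L / 2 := by
  have hx : (x.val : ℝ) + 1 ≤ 2 * L := by exact_mod_cast x.val_lt
  rw [tent, abs_le]
  constructor <;> cases abs_cases ((x.val : ℝ) - L) <;>
    linarith [Nat.cast_nonneg (α := ℝ) x.val]

theorem tent_add_one_sub_tent {L : ℕ} (hL : 0 < L) (x : ZMod (2 * L)) :
    tent L (x + 1) - tent L x = blockSign L x := by
  have : Fact (1 < 2 * L) := ⟨by omega⟩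
  have hx := x.val_lt
  rw [tent, tent, blockSign]
  obtain hlt | hge := lt_or_ge x.val L
  · rw [ZMod.val_add_of_lt (by rw [ZMod.val_one]; omega), ZMod.val_one,
      Nat.div_eq_of_lt hlt, if_pos Even.zero]
    have : (x.val : ℝ) + 1 ≤ L := by exact_mod_cast hlt
    push_cast
    rw [abs_of_nonpos (by linarith), abs_of_nonpos (by linarith)]
    ring
  rw [Nat.div_eq_of_lt_le (k := 1) (by omega) (by omega), if_neg Nat.not_even_one]
  have hL' : (L : ℝ) ≤ x.val := by exact_mod_cast hge
  obtain hlast | hmid := eq_or_lt_of_le (Nat.succ_le_of_lt hx)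
  · have hx1 : x + 1 = 0 := by
      rw [← ZMod.natCast_zmod_val x, ← Nat.cast_succ, hlast, ZMod.natCast_self]
    have : (x.val : ℝ) + 1 = 2 * L := by exact_mod_cast hlast
    rw [hx1, ZMod.val_zero, Nat.cast_zero, zero_sub, abs_neg, abs_of_nonneg (by positivity),
      abs_of_nonneg (by linarith)]
    linarith
  · rw [ZMod.val_add_of_lt (by rw [ZMod.val_one]; omega), ZMod.val_one]
    push_cast
    rw [abs_of_nonneg (by linarith), abs_of_nonneg (by linarith)]
    ring

theorem abs_sum_mul_le_of_eq_add_sub {G : Type*} [AddGroup G] [Fintype G]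
    (p s w : G → ℝ) (c : G) {M : ℝ} (hs : ∀ x, s x = p (x + c) - p x)
    (hp : ∀ x, |p x| ≤ M) :
    |∑ x, s x * w x| ≤ M * ∑ x, |w x - w (x + c)| := by
  have hshift : ∑ x, p x * w x = ∑ x, p (x + c) * w (x + c) :=
    (Fintype.sum_equiv (Equiv.addRight c) _ _ fun _ => rfl).symm
  have hparts : ∑ x, s x * w x = ∑ x, p (x + c) * (w x - w (x + c)) := by
    simp only [hs, sub_mul, mul_sub, sum_sub_distrib, hshift]
  calc |∑ x, s x * w x| ≤ ∑ x, |p (x + c)| * |w x - w (x + c)| := by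
        rw [hparts]; exact (abs_sum_le_sum_abs _ _).trans_eq (by simp only [abs_mul])
    _ ≤ ∑ x, M * |w x - w (x + c)| :=
        sum_le_sum fun x _ => mul_le_mul_of_nonneg_right (hp _) (abs_nonneg _)
    _ = M * ∑ x, |w x - w (x + c)| := (mul_sum _ _ _).symm

def disagreeCount {G : Type*} [Add G] [Fintype G] (σ : G → Bool) (c : G) : ℕ :=
  #{x | σ x ≠ σ (x + c)}

theorem disagreeCount_eq_zero_iff {G : Type*} [Add G] [Fintype G] {σ : G → Bool} {c : G} :
    disagreeCount σ c = 0 ↔ ∀ x, σ (x + c) = σ x := by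
  rw [disagreeCount, card_eq_zero, filter_eq_empty_iff]
  exact forall_congr' fun x => by simp [eq_comm]

theorem even_disagreeCount {G : Type*} [AddGroup G] [Fintype G] (σ : G → Bool) (c : G) :
    Even (disagreeCount σ c) := by
  rw [← ZMod.natCast_eq_zero_iff_even, disagreeCount, natCast_card_filter]
  have hpt : ∀ x, (if σ x ≠ σ (x + c) then (1 : ZMod 2) else 0) =
      (σ x).toNat + (σ (x + c)).toNat := by
    intro x; cases σ x <;> cases σ (x + c) <;> decide
  simp only [hpt, sum_add_distrib]
  rw [Fintype.sum_equiv (Equiv.addRight c) (fun x => ((σ (x + c)).toNat : ZMod 2))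
    (fun x => ((σ x).toNat : ZMod 2)) fun _ => rfl]
  exact CharTwo.add_self_eq_zero _

theorem disagreeCount_comp_addEquiv {G H : Type*} [AddGroup G] [Fintype G] [AddGroup H]
    [Fintype H] (e : G ≃+ H) (σ : H → Bool) (c : G) :
    disagreeCount (σ ∘ e) c = disagreeCount σ (e c) :=
  card_equiv e.toEquiv (by simp [map_add])

theorem disagreeCount_comp_snd {G H : Type*} [AddGroup G] [Fintype G] [AddGroup H]
    [Fintype H] (g : H → Bool) (d : H) :
    disagreeCount (fun t : G × H => g t.2) (0, d) = Fintype.card G * disagreeCount g d := by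
  rw [disagreeCount, disagreeCount, ← card_univ, ← card_product]
  congr 1
  ext t
  simp

theorem ZMod.apply_eq_apply_zero_of_forall_add_one {n : ℕ} [NeZero n] {α : Type*}
    {f : ZMod n → α} (hf : ∀ x, f (x + 1) = f x) (x : ZMod n) : f x = f 0 := by
  have hnat : ∀ k : ℕ, f k = f 0 := fun k => by
    induction k with
    | zero => simp
    | succ k ih => rw [Nat.cast_succ, hf, ih]
  simpa using hnat x.val

theorem two_le_disagreeCount_of_ne {n : ℕ} [NeZero n] {g : ZMod n → Bool} {y z : ZMod n}
    (hyz : g y ≠ g z) : 2 ≤ disagreeCount g 1 := by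
  obtain ⟨k, hk⟩ := even_disagreeCount g 1
  have hne : disagreeCount g 1 ≠ 0 := fun h0 => hyz <| by
    rw [ZMod.apply_eq_apply_zero_of_forall_add_one (disagreeCount_eq_zero_iff.mp h0) y,
      ZMod.apply_eq_apply_zero_of_forall_add_one (disagreeCount_eq_zero_iff.mp h0) z]
  omega

theorem four_le_disagreeCount_of_disagreeCount_eq_zero {a b : ℕ} [NeZero a] [NeZero b]
    (ha : 2 ≤ a) {σ : ZMod a × ZMod b → Bool} (hσ : ∃ t u, σ t ≠ σ u)
    (h0 : disagreeCount σ (1, 0) = 0) : 4 ≤ disagreeCount σ (0, 1) := by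
  set g : ZMod b → Bool := fun y => σ (0, y)
  have hrow : σ = fun t => g t.2 := funext fun t =>
    ZMod.apply_eq_apply_zero_of_forall_add_one (f := fun x => σ (x, t.2))
      (fun x => by simpa using disagreeCount_eq_zero_iff.mp h0 (x, t.2)) t.1
  obtain ⟨t, u, htu⟩ := hσ
  rw [hrow] at htu ⊢
  rw [disagreeCount_comp_snd, ZMod.card]
  have := two_le_disagreeCount_of_ne htu
  nlinarith

theorem four_le_disagreeCount_add {a b : ℕ} [NeZero a] [NeZero b] (ha : 2 ≤ a) (hb : 2 ≤ b)
    {σ : ZMod a × ZMod b → Bool} (hσ : ∃ t u, σ t ≠ σ u) :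
    4 ≤ disagreeCount σ (1, 0) + disagreeCount σ (0, 1) := by
  by_cases h1 : disagreeCount σ (1, 0) = 0
  · have := four_le_disagreeCount_of_disagreeCount_eq_zero ha hσ h1
    omega
  by_cases h2 : disagreeCount σ (0, 1) = 0
  · have hswap (c : ZMod b × ZMod a) :
        disagreeCount (σ ∘ AddEquiv.prodComm) c = disagreeCount σ c.swap :=
      disagreeCount_comp_addEquiv _ σ c
    have hσ' : ∃ t u, (σ ∘ AddEquiv.prodComm) t ≠ (σ ∘ AddEquiv.prodComm) u := by
      obtain ⟨t, u, htu⟩ := hσ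
      exact ⟨t.swap, u.swap, htu⟩
    have := four_le_disagreeCount_of_disagreeCount_eq_zero hb hσ' (by rwa [hswap])
    rw [hswap] at this
    exact this.trans (Nat.le_add_right _ _)
  obtain ⟨k, hk⟩ := even_disagreeCount σ (1, 0)
  obtain ⟨m, hm⟩ := even_disagreeCount σ (0, 1)
  omega

section Energy

variable {a b : ℕ}

theorem one_sub_spin_mul_spin (σ : ZMod a × ZMod b → Bool) (t u : ZMod a × ZMod b) :
    1 - spin σ t * spin σ u = 2 * if σ t ≠ σ u then 1 else 0 := by
  unfold spin; cases σ t <;> cases σ u <;> norm_num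

theorem abs_spin_sub_spin (σ : ZMod a × ZMod b → Bool) (t u : ZMod a × ZMod b) :
    |spin σ t - spin σ u| = 2 * if σ t ≠ σ u then 1 else 0 := by
  unfold spin; cases σ t <;> cases σ u <;> norm_num

variable [NeZero a] [NeZero b]

theorem sum_one_sub_spin_mul_spin_add (σ : ZMod a × ZMod b → Bool) (c : ZMod a × ZMod b) :
    ∑ t, (1 - spin σ t * spin σ (t + c)) = 2 * disagreeCount σ c := by
  simp only [one_sub_spin_mul_spin, ← mul_sum, sum_boole, disagreeCount]

theorem sum_abs_spin_sub_spin_add (σ : ZMod a × ZMod b → Bool) (c : ZMod a × ZMod b) :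
    ∑ t, |spin σ t - spin σ (t + c)| = 2 * disagreeCount σ c := by
  simp only [abs_spin_sub_spin, ← mul_sum, sum_boole, disagreeCount]

theorem ham_sub_ham_const_true (J : ℝ) (hf : ZMod a × ZMod b → ℝ)
    (σ : ZMod a × ZMod b → Bool) :
    ham J hf σ - ham J hf (fun _ => true) =
      2 * J * (disagreeCount σ (1, 0) + disagreeCount σ (0, 1)) +
        ∑ t, hf t * (1 - spin σ t) := by
  have h1 := sum_one_sub_spin_mul_spin_add σ (1, 0)
  have h2 := sum_one_sub_spin_mul_spin_add σ (0, 1)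
  simp only [sum_sub_distrib] at h1 h2
  simp only [ham, spin, if_true, mul_one, sum_add_distrib, mul_sub, sum_sub_distrib] at h1 h2 ⊢
  linear_combination J * h1 + J * h2

end Energy

theorem abs_sum_mul_one_sub_spin_le {a b : ℕ} [NeZero a] [NeZero b]
    (p s : ZMod a × ZMod b → ℝ) (c : ZMod a × ZMod b) {M : ℝ}
    (hs : ∀ t, s t = p (t + c) - p t) (hp : ∀ t, |p t| ≤ M) (σ : ZMod a × ZMod b → Bool) :
    |∑ t, s t * (1 - spin σ t)| ≤ 2 * M * disagreeCount σ c := by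
  have := abs_sum_mul_le_of_eq_add_sub p s (fun t => 1 - spin σ t) c hs hp
  simp only [sub_sub_sub_cancel_left, abs_sub_comm (spin σ (_ + c)),
    sum_abs_spin_sub_spin_add] at this
  linarith

section CellBoard

variable {L1 L2 : ℕ} [NeZero (2 * L1)] [NeZero (2 * L2)]
  (σ : ZMod (2 * L1) × ZMod (2 * L2) → Bool)

theorem abs_sum_blockSign_mul_le_fst (hL1 : 0 < L1) :
    |∑ t, blockSign L1 t.1 * blockSign L2 t.2 * (1 - spin σ t)| ≤
      L1 * disagreeCount σ (1, 0) := by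
  have := abs_sum_mul_one_sub_spin_le (fun t => tent L1 t.1 * blockSign L2 t.2)
    (fun t => blockSign L1 t.1 * blockSign L2 t.2) (1, 0)
    (fun t => by simp [← tent_add_one_sub_tent hL1 t.1, sub_mul])
    (fun t => by simpa [abs_mul, abs_blockSign] using abs_tent_le L1 t.1) σ
  linarith

theorem abs_sum_blockSign_mul_le_snd (hL2 : 0 < L2) :
    |∑ t, blockSign L1 t.1 * blockSign L2 t.2 * (1 - spin σ t)| ≤
      L2 * disagreeCount σ (0, 1) := by
  have := abs_sum_mul_one_sub_spin_le (fun t => blockSign L1 t.1 * tent L2 t.2)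
    (fun t => blockSign L1 t.1 * blockSign L2 t.2) (0, 1)
    (fun t => by simp [← tent_add_one_sub_tent hL2 t.2, mul_sub])
    (fun t => by simpa [abs_mul, abs_blockSign] using abs_tent_le L2 t.2) σ
  linarith

end CellBoard

theorem neg_mul_add_le_of_abs_le_mul {S x y l₁ l₂ : ℝ} (hl₁ : 0 < l₁) (hl₂ : 0 < l₂)
    (hx : |S| ≤ l₁ * x) (hy : |S| ≤ l₂ * y) :
    -(l₁ * l₂ / (l₁ + l₂) * (x + y)) ≤ S := by
  have := neg_abs_le S
  rw [neg_le, div_mul_eq_mul_div, le_div_iff₀ (by positivity)]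
  nlinarith

theorem peierls_bound_fundamental_torus_general (L1 L2 : ℕ) (hL1 : 0 < L1) (hL2 : 0 < L2)
    [NeZero (2 * L1)] [NeZero (2 * L2)] (J h : ℝ) (hh : 0 < h)
    (hcond : h < 2 * J / (L1 : ℝ) + 2 * J / (L2 : ℝ))
    (σ : ZMod (2 * L1) × ZMod (2 * L2) → Bool) (hσ : ∃ t u, σ t ≠ σ u) :
    ham J (cellField L1 L2 h) σ
        - ham J (cellField L1 L2 h) (fun _ : ZMod (2 * L1) × ZMod (2 * L2) => true)
      ≥ 4 * (2 * J - h * (L1 : ℝ) * (L2 : ℝ) / ((L1 : ℝ) + (L2 : ℝ))) := by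
  have hl₁ : (0 : ℝ) < L1 := by exact_mod_cast hL1
  have hl₂ : (0 : ℝ) < L2 := by exact_mod_cast hL2
  set S : ℝ := ∑ t : ZMod (2 * L1) × ZMod (2 * L2),
    blockSign L1 t.1 * blockSign L2 t.2 * (1 - spin σ t)
  have hfield : ∑ t : ZMod (2 * L1) × ZMod (2 * L2), cellField L1 L2 h t * (1 - spin σ t)
      = h * S := by
    simp only [S, cellField_eq_mul_blockSign, mul_assoc, mul_sum]
  have hB : (4 : ℝ) ≤ disagreeCount σ (1, 0) + disagreeCount σ (0, 1) := by
    exact_mod_cast four_le_disagreeCount_add (by omega) (by omega) hσ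
  rw [ge_iff_le, ham_sub_ham_const_true, hfield]
  set B : ℝ := disagreeCount σ (1, 0) + disagreeCount σ (0, 1)
  have hS : -(L1 * L2 / (L1 + L2) * B) ≤ S := neg_mul_add_le_of_abs_le_mul hl₁ hl₂
    (abs_sum_blockSign_mul_le_fst σ hL1) (abs_sum_blockSign_mul_le_snd σ hL2)
  have hgap : h * L1 * L2 / (L1 + L2) < 2 * J := by
    rw [div_add_div _ _ hl₁.ne' hl₂.ne', lt_div_iff₀ (by positivity)] at hcond
    rw [div_lt_iff₀ (by positivity)]
    linarith
  calc 4 * (2 * J - h * L1 * L2 / (L1 + L2))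
      ≤ B * (2 * J - h * L1 * L2 / (L1 + L2)) :=
        mul_le_mul_of_nonneg_right hB (sub_nonneg.mpr hgap.le)
    _ = 2 * J * B + h * -(L1 * L2 / (L1 + L2) * B) := by ring
    _ ≤ 2 * J * B + h * S := by gcongr

/-- Peierls bound on the fundamental torus: if `h < 2J/L₁ + 2J/L₂`,
every non-constant configuration `σ` on `𝕋^{[2×2]} = (ℤ/2L₁ℤ) × (ℤ/2L₂ℤ)` satisfies
`H_{[2×2]}(σ) − H_{[2×2]}(σ⁺) ≥ 4·(2J − h·L₁L₂/(L₁+L₂))`, where `σ⁺ ≡ +1`. -/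
theorem peierls_bound_fundamental_torus (L1 L2 : ℕ) (hL1 : 0 < L1) (hL2 : 0 < L2)
    [NeZero (2 * L1)] [NeZero (2 * L2)] (J h : ℝ) (hJ : 0 < J) (hh : 0 < h)
    (hcond : h < 2 * J / (L1 : ℝ) + 2 * J / (L2 : ℝ))
    (σ : ZMod (2 * L1) × ZMod (2 * L2) → Bool) (hσ : ∃ t u, σ t ≠ σ u) :
    ham J (cellField L1 L2 h) σ
        - ham J (cellField L1 L2 h) (fun _ : ZMod (2 * L1) × ZMod (2 * L2) => true)
      ≥ 4 * (2 * J - h * (L1 : ℝ) * (L2 : ℝ) / ((L1 : ℝ) + (L2 : ℝ))) :=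
  peierls_bound_fundamental_torus_general L1 L2 hL1 hL2 J h hh hcond σ hσ
end

section
/- Let L₁, L₂ be positive integers, J > 0, h > 0 with h < 2J/L₁ + 2J/L₂, let N ≥ 2 be even and β ≥ 0. Then every configuration σ ∈ {−1,+1}^{𝕋_N} that is non-constant and satisfies σ(t + (2L₁,0)) = σ(t) and σ(t + (0,2L₂)) = σ(t) for all t obeys e^{−βH_N(σ)} / Z_N(β) ≤ exp(−β·N²·(2J − h·L₁L₂/(L₁+L₂))). -/
/-!
Relative to the all-plus configuration, `σ` pays `2J` for each unsatisfied bond and gains at most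
`2h` for each minus site on a `−h` cell. A row of `σ` has period `2L₁` on a circle of length
`N L₁`, so if it is not constant it has an up-flip and a down-flip in every period, hence at least
`N` unsatisfied bonds, which bounds the gain `h N L₁` of its `N L₁ / 2` sites on `−h` cells by
`h L₁` per bond; a constant row gains nothing, since the field sums to zero along it. So the total
gain is at most `h L₁ B₁` and, by the same argument on columns, at most `h L₂ B₂`, where `Bᵢ`
counts the unsatisfied bonds in direction `i`; together, at most `h L₁L₂/(L₁+L₂) · (B₁ + B₂)`,
against a cost of `2J (B₁ + B₂)`. Finally `B₁ + B₂ ≥ N²`: the set of non-constant rows is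
invariant under the shift by `2L₂`, so it is empty or has at least `N / 2` elements, likewise for
columns, and if all rows are constant then all `N L₁` columns are not. The partition function is
bounded below by the all-plus term.
-/

open Finset Function

section FiniteGroup

variable {G : Type*} [AddCommGroup G]

theorem addOrderOf_le_card_of_add_mem {S : Finset G} {g x : G} (hS : ∀ y ∈ S, y + g ∈ S)
    (hx : x ∈ S) : addOrderOf g ≤ #S := by
  have hmem : ∀ k : ℕ, x + k • g ∈ S := by
    intro k
    induction k with
    | zero => simpa using hx
    | succ k ih => simpa [succ_nsmul, ← add_assoc] using hS _ ih
  simpa using card_le_card_of_injOn (s := range (addOrderOf g)) (fun k => x + k • g)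
    (fun k _ => hmem k) fun k hk l hl hkl =>
      nsmul_injOn_Iio_addOrderOf (by simpa using hk) (by simpa using hl) (add_left_cancel hkl)

variable [Fintype G]

theorem sum_eq_zero_of_antiperiodic {φ : G → ℝ} {c : G} (hφ : Antiperiodic φ c) :
    ∑ x, φ x = 0 := by
  have h : ∑ x, φ (x + c) = ∑ x, φ x := Fintype.sum_equiv (Equiv.addRight c) _ _ fun _ => rfl
  simp only [hφ _, sum_neg_distrib] at h
  linarith

def flips (f : G → Bool) (e : G) : Finset G :=
  univ.filter fun x => f x ≠ f (x + e)

variable [DecidableEq G]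

theorem two_mul_addOrderOf_le_card_flips {f : G → Bool} {g e : G} (hf : Periodic f g)
    (hflip : ∃ x, f x ≠ f (x + e)) : 2 * addOrderOf g ≤ #(flips f e) := by
  set flipsTo : Bool → Finset G := fun b => univ.filter fun x => f x = !b ∧ f (x + e) = b
  have hsplit : flips f e = flipsTo true ∪ flipsTo false := by
    ext x; simp only [flips, flipsTo, mem_union, mem_filter, mem_univ, true_and]
    cases f x <;> cases f (x + e) <;> simp
  have hdisj : Disjoint (flipsTo true) (flipsTo false) :=
    disjoint_filter.2 fun x _ h h' => by simp [h.1] at h'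
  -- translation by `e` preserves the number of `true` sites
  have hcard : #(flipsTo true) = #(flipsTo false) := by
    have htrans : ∑ x, (if f (x + e) then 1 else 0 : ℤ) = ∑ x, if f x then 1 else 0 :=
      Fintype.sum_equiv (Equiv.addRight e) _ _ fun _ => rfl
    have hpt : ∀ x, (if f (x + e) then 1 else 0 : ℤ) - (if f x then 1 else 0) =
        (if f x = false ∧ f (x + e) = true then 1 else 0) -
          (if f x = true ∧ f (x + e) = false then 1 else 0) := by
      intro x; cases f x <;> cases f (x + e) <;> simp
    have := sum_congr rfl fun x (_ : x ∈ univ) => hpt x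
    rw [sum_sub_distrib, sum_sub_distrib, htrans, sub_self, eq_comm, sub_eq_zero,
      ← natCast_card_filter, ← natCast_card_filter] at this
    exact_mod_cast this
  have hinv : ∀ b, ∀ y ∈ flipsTo b, y + g ∈ flipsTo b := fun b y hy => by
    simpa [flipsTo, add_right_comm y g e, hf _, hf (y + e)] using hy
  obtain ⟨x, hx⟩ := hflip
  have hx' : x ∈ flipsTo (f (x + e)) := by
    simp only [flipsTo, mem_filter, mem_univ, true_and, and_true]
    revert hx; cases f x <;> cases f (x + e) <;> simp
  have hall : ∀ b b', #(flipsTo b) = #(flipsTo b') := by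
    rintro (_ | _) (_ | _) <;> simp [hcard]
  have hle : ∀ b, addOrderOf g ≤ #(flipsTo b) := fun b =>
    hall _ b ▸ addOrderOf_le_card_of_add_mem (hinv _) hx'
  rw [hsplit, card_union_of_disjoint hdisj]
  linarith [hle true, hle false]

end FiniteGroup

section Cyclic

variable {N L : ℕ} [NeZero (N * L)]

theorem exists_ne_add_one_of_ne {n : ℕ} [NeZero n] {β : Type*} {f : ZMod n → β}
    (hf : ∃ x y, f x ≠ f y) : ∃ x, f x ≠ f (x + 1) := by
  by_contra! h
  have hp : Periodic f 1 := fun x => (h x).symm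
  obtain ⟨x, y, hxy⟩ := hf
  rw [← ZMod.natCast_zmod_val x, ← ZMod.natCast_zmod_val y, ← mul_one (x.val : ZMod n),
    ← mul_one (y.val : ZMod n), hp.nat_mul_eq, hp.nat_mul_eq] at hxy
  exact hxy rfl

theorem two_mul_addOrderOf_natCast_two_mul (hN : Even N) :
    2 * addOrderOf ((2 * L : ℕ) : ZMod (N * L)) = N := by
  have hL : 0 < L := Nat.pos_of_mul_pos_left (NeZero.pos (N * L))
  have hdvd : 2 * L ∣ N * L := Nat.mul_dvd_mul_right (even_iff_two_dvd.1 hN) L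
  rw [ZMod.addOrderOf_coe _ (NeZero.ne _), Nat.gcd_eq_right hdvd, mul_comm 2 L, mul_comm N L,
    Nat.mul_div_mul_left _ _ hL, Nat.two_mul_div_two_of_even hN]

theorem even_val_add_div_iff (hN : Even N) (x : ZMod (N * L)) :
    Even ((x + L).val / L) ↔ ¬Even (x.val / L) := by
  have hL : 0 < L := Nat.pos_of_mul_pos_left (NeZero.pos (N * L))
  rw [← ZMod.natCast_zmod_val x, ← Nat.cast_add, ZMod.val_natCast, ZMod.val_natCast,
    Nat.mod_eq_of_lt x.val_lt, Nat.mod_mul_left_div_self, Nat.add_div_right _ hL,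
    hN.mod_even_iff, Nat.even_add_one]

theorem le_card_flips_one (hN : Even N) {f : ZMod (N * L) → Bool}
    (hf : Periodic f ((2 * L : ℕ) : ZMod (N * L))) (hnc : ∃ x y, f x ≠ f y) :
    N ≤ #(flips f 1) := by
  have := two_mul_addOrderOf_le_card_flips hf (exists_ne_add_one_of_ne hnc)
  rwa [two_mul_addOrderOf_natCast_two_mul hN] at this

theorem neg_two_mul_sum_le_sum_abs_sub_sum {ι : Type*} [Fintype ι] (s : Finset ι) (φ : ι → ℝ) :
    -2 * ∑ x ∈ s, φ x ≤ ∑ x, |φ x| - ∑ x, φ x := by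
  rw [mul_sum, ← sum_sub_distrib]
  calc ∑ x ∈ s, -2 * φ x ≤ ∑ x ∈ s, (|φ x| - φ x) :=
        sum_le_sum fun x _ => by linarith [neg_abs_le (φ x)]
    _ ≤ ∑ x, (|φ x| - φ x) :=
        sum_le_sum_of_subset_of_nonneg (subset_univ s) fun x _ _ => sub_nonneg.2 (le_abs_self _)

theorem neg_two_mul_sum_le_mul_card_flips (hN : Even N) {f : ZMod (N * L) → Bool}
    (hf : Periodic f ((2 * L : ℕ) : ZMod (N * L))) {φ : ZMod (N * L) → ℝ} {h : ℝ}
    (hφ : Antiperiodic φ (L : ZMod (N * L))) (hφh : ∀ x, |φ x| ≤ h) :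
    -2 * ∑ x ∈ univ.filter (fun x => f x = false), φ x ≤ h * L * #(flips f 1) := by
  have hsum := sum_eq_zero_of_antiperiodic hφ
  have h0 : 0 ≤ h := (abs_nonneg _).trans (hφh 0)
  by_cases hnc : ∃ x y, f x ≠ f y
  · have hflips : (N : ℝ) ≤ #(flips f 1) := by exact_mod_cast le_card_flips_one hN hf hnc
    calc -2 * ∑ x ∈ univ.filter (fun x => f x = false), φ x ≤ ∑ x, |φ x| - ∑ x, φ x :=
          neg_two_mul_sum_le_sum_abs_sub_sum _ _
      _ ≤ ∑ _x : ZMod (N * L), h := by rw [hsum, sub_zero]; exact sum_le_sum fun x _ => hφh x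
      _ = h * L * N := by simp [ZMod.card]; ring
      _ ≤ h * L * #(flips f 1) := by gcongr
  · push Not at hnc
    have hzero : ∑ x ∈ univ.filter (fun x => f x = false), φ x = 0 := by
      cases hf0 : f 0
      · simpa [fun x => (hnc x 0).trans hf0] using hsum
      · simp [fun x => (hnc x 0).trans hf0]
    rw [hzero, mul_zero]
    positivity

end Cyclic

section Torus

variable {α β γ : Type*} [Fintype α] [Fintype β]

theorem card_flips_fst [AddCommGroup α] [AddCommGroup β] (σ : α × β → Bool) (e : α) :
    #(flips σ (e, 0)) = ∑ y, #(flips (fun x => σ (x, y)) e) := by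
  simp only [flips, card_filter]
  rw [Fintype.sum_prod_type_right]
  simp

theorem card_flips_snd [AddCommGroup α] [AddCommGroup β] (σ : α × β → Bool) (e : β) :
    #(flips σ (0, e)) = ∑ x, #(flips (fun y => σ (x, y)) e) := by
  simp only [flips, card_filter]
  rw [Fintype.sum_prod_type]
  simp

variable [DecidableEq γ]

def nonconstRows (σ : α × β → γ) : Finset β :=
  univ.filter fun y => ∃ x x', σ (x, y) ≠ σ (x', y)

def nonconstCols (σ : α × β → γ) : Finset α :=
  univ.filter fun x => ∃ y y', σ (x, y) ≠ σ (x, y')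

theorem nonconstCols_eq_univ {σ : α × β → γ} (hnc : ∃ t u, σ t ≠ σ u)
    (hR : nonconstRows σ = ∅) : nonconstCols σ = univ := by
  have hrow : ∀ y x x', σ (x, y) = σ (x', y) := by
    simpa [nonconstRows, filter_eq_empty_iff] using hR
  obtain ⟨⟨x₁, y₁⟩, ⟨x₂, y₂⟩, hne⟩ := hnc
  exact eq_univ_of_forall fun x =>
    mem_filter.2 ⟨mem_univ _, y₁, y₂, by rwa [hrow y₁ x x₁, hrow y₂ x x₂]⟩

theorem nonconstRows_eq_univ {σ : α × β → γ} (hnc : ∃ t u, σ t ≠ σ u)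
    (hC : nonconstCols σ = ∅) : nonconstRows σ = univ := by
  have hcol : ∀ x y y', σ (x, y) = σ (x, y') := by
    simpa [nonconstCols, filter_eq_empty_iff] using hC
  obtain ⟨⟨x₁, y₁⟩, ⟨x₂, y₂⟩, hne⟩ := hnc
  exact eq_univ_of_forall fun y =>
    mem_filter.2 ⟨mem_univ _, x₁, x₂, by rwa [hcol x₁ y y₁, hcol x₂ y y₂]⟩

end Torus

section PeriodicTorus

variable {N L : ℕ} [NeZero (N * L)] {α β γ : Type*} [AddCommGroup α] [Fintype α]
  [AddCommGroup β] [Fintype β] [DecidableEq γ]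

theorem le_two_mul_card_nonconstRows (hN : Even N) {σ : α × ZMod (N * L) → γ}
    (hσ : Periodic σ (0, ((2 * L : ℕ) : ZMod (N * L)))) (hR : (nonconstRows σ).Nonempty) :
    N ≤ 2 * #(nonconstRows σ) := by
  obtain ⟨y₀, hy₀⟩ := hR
  have hshift : ∀ y ∈ nonconstRows σ, y + ((2 * L : ℕ) : ZMod (N * L)) ∈ nonconstRows σ := by
    intro y hy
    have hrow : ∀ x, σ (x, y + ((2 * L : ℕ) : ZMod (N * L))) = σ (x, y) := fun x => by
      simpa using hσ (x, y)
    simpa only [nonconstRows, mem_filter, mem_univ, true_and, hrow] using hy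
  calc N = 2 * addOrderOf ((2 * L : ℕ) : ZMod (N * L)) :=
        (two_mul_addOrderOf_natCast_two_mul hN).symm
    _ ≤ _ := Nat.mul_le_mul_left 2 (addOrderOf_le_card_of_add_mem hshift hy₀)

theorem le_two_mul_card_nonconstCols (hN : Even N) {σ : ZMod (N * L) × β → γ}
    (hσ : Periodic σ (((2 * L : ℕ) : ZMod (N * L)), 0)) (hC : (nonconstCols σ).Nonempty) :
    N ≤ 2 * #(nonconstCols σ) := by
  obtain ⟨x₀, hx₀⟩ := hC
  have hshift : ∀ x ∈ nonconstCols σ, x + ((2 * L : ℕ) : ZMod (N * L)) ∈ nonconstCols σ := by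
    intro x hx
    have hcol : ∀ y, σ (x + ((2 * L : ℕ) : ZMod (N * L)), y) = σ (x, y) := fun y => by
      simpa using hσ (x, y)
    simpa only [nonconstCols, mem_filter, mem_univ, true_and, hcol] using hx
  calc N = 2 * addOrderOf ((2 * L : ℕ) : ZMod (N * L)) :=
        (two_mul_addOrderOf_natCast_two_mul hN).symm
    _ ≤ _ := Nat.mul_le_mul_left 2 (addOrderOf_le_card_of_add_mem hshift hx₀)

theorem mul_card_nonconstRows_le_card_flips (hN : Even N) {σ : ZMod (N * L) × β → Bool}
    (hσ : Periodic σ (((2 * L : ℕ) : ZMod (N * L)), 0)) :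
    N * #(nonconstRows σ) ≤ #(flips σ (1, 0)) := by
  rw [card_flips_fst]
  calc N * #(nonconstRows σ) = ∑ _y ∈ nonconstRows σ, N := by rw [sum_const, smul_eq_mul, mul_comm]
    _ ≤ ∑ y ∈ nonconstRows σ, #(flips (fun x => σ (x, y)) 1) :=
        sum_le_sum fun y hy => le_card_flips_one (f := fun x => σ (x, y)) hN
          (fun x => by simpa using hσ (x, y))
          (mem_filter.1 hy).2
    _ ≤ _ := sum_le_sum_of_subset (subset_univ _)

theorem mul_card_nonconstCols_le_card_flips (hN : Even N) {σ : α × ZMod (N * L) → Bool}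
    (hσ : Periodic σ (0, ((2 * L : ℕ) : ZMod (N * L)))) :
    N * #(nonconstCols σ) ≤ #(flips σ (0, 1)) := by
  rw [card_flips_snd]
  calc N * #(nonconstCols σ) = ∑ _x ∈ nonconstCols σ, N := by rw [sum_const, smul_eq_mul, mul_comm]
    _ ≤ ∑ x ∈ nonconstCols σ, #(flips (fun y => σ (x, y)) 1) :=
        sum_le_sum fun x hx => le_card_flips_one (f := fun y => σ (x, y)) hN
          (fun y => by simpa using hσ (x, y))
          (mem_filter.1 hx).2
    _ ≤ _ := sum_le_sum_of_subset (subset_univ _)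

theorem neg_two_mul_sum_le_mul_card_flips_fst (hN : Even N) {σ : ZMod (N * L) × β → Bool}
    (hσ : Periodic σ (((2 * L : ℕ) : ZMod (N * L)), 0)) {φ : ZMod (N * L) × β → ℝ} {h : ℝ}
    (hφ : Antiperiodic φ ((L : ZMod (N * L)), 0)) (hφh : ∀ t, |φ t| ≤ h) :
    -2 * ∑ t ∈ univ.filter (fun t => σ t = false), φ t ≤ h * L * #(flips σ (1, 0)) := by
  rw [card_flips_fst, Nat.cast_sum, mul_sum, sum_filter, Fintype.sum_prod_type_right, mul_sum]
  refine sum_le_sum fun y _ => ?_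
  rw [← sum_filter, ← mul_sum]
  exact neg_two_mul_sum_le_mul_card_flips (f := fun x => σ (x, y)) (φ := fun x => φ (x, y)) hN
    (fun x => by simpa using hσ (x, y))
    (fun x => by simpa using hφ (x, y)) fun x => hφh _

theorem neg_two_mul_sum_le_mul_card_flips_snd (hN : Even N) {σ : α × ZMod (N * L) → Bool}
    (hσ : Periodic σ (0, ((2 * L : ℕ) : ZMod (N * L)))) {φ : α × ZMod (N * L) → ℝ} {h : ℝ}
    (hφ : Antiperiodic φ (0, (L : ZMod (N * L)))) (hφh : ∀ t, |φ t| ≤ h) :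
    -2 * ∑ t ∈ univ.filter (fun t => σ t = false), φ t ≤ h * L * #(flips σ (0, 1)) := by
  rw [card_flips_snd, Nat.cast_sum, mul_sum, sum_filter, Fintype.sum_prod_type, mul_sum]
  refine sum_le_sum fun x _ => ?_
  rw [← sum_filter, ← mul_sum]
  exact neg_two_mul_sum_le_mul_card_flips (f := fun y => σ (x, y)) (φ := fun y => φ (x, y)) hN
    (fun y => by simpa using hσ (x, y))
    (fun y => by simpa using hφ (x, y)) fun y => hφh _

end PeriodicTorus

theorem mul_self_le_card_flips_add_card_flips {N L1 L2 : ℕ} [NeZero (N * L1)] [NeZero (N * L2)]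
    (hN : Even N)
    {σ : ZMod (N * L1) × ZMod (N * L2) → Bool} (hnc : ∃ t u, σ t ≠ σ u)
    (hσ₁ : Periodic σ (((2 * L1 : ℕ) : ZMod (N * L1)), 0))
    (hσ₂ : Periodic σ (0, ((2 * L2 : ℕ) : ZMod (N * L2)))) :
    N * N ≤ #(flips σ (1, 0)) + #(flips σ (0, 1)) := by
  have hL1 : N ≤ N * L1 := Nat.le_mul_of_pos_right N (Nat.pos_of_mul_pos_left (NeZero.pos (N * L1)))
  have hL2 : N ≤ N * L2 := Nat.le_mul_of_pos_right N (Nat.pos_of_mul_pos_left (NeZero.pos (N * L2)))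
  have hRC : N ≤ #(nonconstRows σ) + #(nonconstCols σ) := by
    rcases (nonconstRows σ).eq_empty_or_nonempty with hR | hR
    · rw [nonconstCols_eq_univ hnc hR, card_univ, ZMod.card]
      omega
    rcases (nonconstCols σ).eq_empty_or_nonempty with hC | hC
    · rw [nonconstRows_eq_univ hnc hC, card_univ, ZMod.card]
      omega
    have := le_two_mul_card_nonconstRows hN hσ₂ hR
    have := le_two_mul_card_nonconstCols hN hσ₁ hC
    omega
  calc N * N ≤ N * #(nonconstRows σ) + N * #(nonconstCols σ) := by
        rw [← mul_add]; exact Nat.mul_le_mul_left N hRC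
    _ ≤ _ := add_le_add (mul_card_nonconstRows_le_card_flips hN hσ₁)
        (mul_card_nonconstCols_le_card_flips hN hσ₂)

section CellField

variable {N L1 L2 : ℕ}

theorem antiperiodic_cellField_fst [NeZero (N * L1)] (hN : Even N) {b : ℕ} (h : ℝ) :
    Antiperiodic (cellField (a := N * L1) (b := b) L1 L2 h) ((L1 : ZMod (N * L1)), 0) := by
  intro t
  simp only [cellField, Prod.fst_add, Prod.snd_add, add_zero, Nat.even_add,
    even_val_add_div_iff hN]
  split_ifs <;> first | rfl | exact (neg_neg h).symm | tauto

theorem antiperiodic_cellField_snd [NeZero (N * L2)] (hN : Even N) {a : ℕ} (h : ℝ) :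
    Antiperiodic (cellField (a := a) (b := N * L2) L1 L2 h) (0, (L2 : ZMod (N * L2))) := by
  intro t
  simp only [cellField, Prod.fst_add, Prod.snd_add, add_zero, Nat.even_add,
    even_val_add_div_iff hN]
  split_ifs <;> first | rfl | exact (neg_neg h).symm | tauto

theorem abs_cellField {a b : ℕ} (h : ℝ) (t : ZMod a × ZMod b) : |cellField L1 L2 h t| = |h| := by
  unfold cellField
  split_ifs <;> simp

end CellField

section Gibbs

variable {a b : ℕ} [NeZero a] [NeZero b]

theorem ham_eq_ham_true_add (J : ℝ) (hf : ZMod a × ZMod b → ℝ) (σ : ZMod a × ZMod b → Bool) :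
    ham J hf σ = ham J hf (fun _ => true) + 2 * J * (#(flips σ (1, 0)) + #(flips σ (0, 1)))
      + 2 * ∑ t ∈ univ.filter (fun t => σ t = false), hf t := by
  simp only [ham, flips, natCast_card_filter, sum_filter, mul_sum, ← sum_sub_distrib,
    ← sum_add_distrib]
  refine sum_congr rfl fun t _ => ?_
  unfold spin
  cases σ t <;> cases σ (t + (1, 0)) <;> cases σ (t + (0, 1)) <;> simp <;> ring

theorem exp_div_Zfun_le (β J : ℝ) (hf : ZMod a × ZMod b → ℝ) (σ τ : ZMod a × ZMod b → Bool) :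
    Real.exp (-β * ham J hf σ) / Zfun β J hf ≤ Real.exp (-β * (ham J hf σ - ham J hf τ)) := by
  have hZ : Real.exp (-β * ham J hf τ) ≤ Zfun β J hf :=
    single_le_sum (f := fun s => Real.exp (-β * ham J hf s)) (fun s _ => (Real.exp_pos _).le)
      (mem_univ τ)
  calc Real.exp (-β * ham J hf σ) / Zfun β J hf
      ≤ Real.exp (-β * ham J hf σ) / Real.exp (-β * ham J hf τ) :=
        div_le_div_of_nonneg_left (Real.exp_pos _).le (Real.exp_pos _) hZ
    _ = Real.exp (-β * (ham J hf σ - ham J hf τ)) := by rw [← Real.exp_sub]; ring_nf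

end Gibbs

theorem le_mul_div_add_mul_add {L1 L2 h B1 B2 m : ℝ} (hL1 : 0 < L1) (hL2 : 0 < L2)
    (h1 : m ≤ h * L1 * B1) (h2 : m ≤ h * L2 * B2) :
    m ≤ h * L1 * L2 / (L1 + L2) * (B1 + B2) := by
  rw [div_mul_eq_mul_div, le_div_iff₀ (by positivity)]
  nlinarith [mul_le_mul_of_nonneg_left h1 hL2.le, mul_le_mul_of_nonneg_left h2 hL1.le]

theorem periodic_config_bound_general (L1 L2 N : ℕ) (hL1 : 0 < L1) (hL2 : 0 < L2)
    (hNeven : Even N) [NeZero (N * L1)] [NeZero (N * L2)]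
    (J h β : ℝ) (hh : 0 < h) (hβ : 0 ≤ β)
    (hcond : h < 2 * J / (L1 : ℝ) + 2 * J / (L2 : ℝ))
    (σ : ZMod (N * L1) × ZMod (N * L2) → Bool)
    (hnc : ∃ t u, σ t ≠ σ u)
    (hper1 : ∀ t, σ (t + (((2 * L1 : ℕ) : ZMod (N * L1)), 0)) = σ t)
    (hper2 : ∀ t, σ (t + (0, ((2 * L2 : ℕ) : ZMod (N * L2)))) = σ t) :
    Real.exp (-β * ham J (cellField L1 L2 h) σ) / Zfun (a := N * L1) (b := N * L2) β J (cellField L1 L2 h)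
      ≤ Real.exp (-β * (N : ℝ) ^ 2 *
          (2 * J - h * (L1 : ℝ) * (L2 : ℝ) / ((L1 : ℝ) + (L2 : ℝ)))) := by
  set hf : ZMod (N * L1) × ZMod (N * L2) → ℝ := cellField L1 L2 h
  have hL1' : (0 : ℝ) < L1 := by exact_mod_cast hL1
  have hL2' : (0 : ℝ) < L2 := by exact_mod_cast hL2
  have hfield : ∀ t, |hf t| ≤ h := fun t => (abs_cellField h t).trans_le (abs_of_pos hh).le
  have hbonds : ((N * N : ℕ) : ℝ) ≤ #(flips σ (1, 0)) + #(flips σ (0, 1)) := by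
    exact_mod_cast mul_self_le_card_flips_add_card_flips hNeven hnc hper1 hper2
  have hrows := neg_two_mul_sum_le_mul_card_flips_fst hNeven hper1
    (antiperiodic_cellField_fst hNeven h) hfield
  have hcols := neg_two_mul_sum_le_mul_card_flips_snd hNeven hper2
    (antiperiodic_cellField_snd hNeven h) hfield
  have hminus := le_mul_div_add_mul_add hL1' hL2' hrows hcols
  have hc : h * L1 * L2 / (L1 + L2) ≤ 2 * J := by
    rw [div_add_div _ _ hL1'.ne' hL2'.ne', lt_div_iff₀ (by positivity)] at hcond
    rw [div_le_iff₀ (by positivity)]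
    linarith
  have hgap : (N : ℝ) ^ 2 * (2 * J - h * L1 * L2 / (L1 + L2)) ≤
      ham J hf σ - ham J hf fun _ => true := by
    rw [ham_eq_ham_true_add]
    push_cast at hbonds
    nlinarith
  calc _ ≤ _ := exp_div_Zfun_le β J hf σ fun _ => true
    _ ≤ _ := Real.exp_le_exp.2 (by nlinarith [mul_le_mul_of_nonneg_left hgap hβ])

/-- if `h < 2J/L₁ + 2J/L₂`, every non-constant `(2L₁,0)`- and
`(0,2L₂)`-periodic configuration `σ` on `𝕋_N` satisfies
`e^{−βH_N(σ)} / Z_N(β) ≤ exp(−β·N²·(2J − h·L₁L₂/(L₁+L₂)))`. -/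
theorem periodic_config_bound (L1 L2 N : ℕ) (hL1 : 0 < L1) (hL2 : 0 < L2)
    (hN : 2 ≤ N) (hNeven : Even N) [NeZero (N * L1)] [NeZero (N * L2)]
    (J h β : ℝ) (hJ : 0 < J) (hh : 0 < h) (hβ : 0 ≤ β)
    (hcond : h < 2 * J / (L1 : ℝ) + 2 * J / (L2 : ℝ))
    (σ : ZMod (N * L1) × ZMod (N * L2) → Bool)
    (hnc : ∃ t u, σ t ≠ σ u)
    (hper1 : ∀ t, σ (t + (((2 * L1 : ℕ) : ZMod (N * L1)), 0)) = σ t)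
    (hper2 : ∀ t, σ (t + (0, ((2 * L2 : ℕ) : ZMod (N * L2)))) = σ t) :
    Real.exp (-β * ham J (cellField L1 L2 h) σ) / Zfun (a := N * L1) (b := N * L2) β J (cellField L1 L2 h)
      ≤ Real.exp (-β * (N : ℝ) ^ 2 *
          (2 * J - h * (L1 : ℝ) * (L2 : ℝ) / ((L1 : ℝ) + (L2 : ℝ)))) :=
  periodic_config_bound_general L1 L2 N hL1 hL2 hNeven J h β hh hβ hcond σ hnc hper1 hper2
end

section
/- (Bound on the propagated bad-block event, inequality (4.28).) Let L₁, L₂ be positive integers, J > 0, h > 0 with h < 2J/L₁ + 2J/L₂, N ≥ 2 even, and β ≥ 0. Let Λ = Λ₁ × Λ₂ with Λ_i = {r ∈ ℤ : |r + 1/2| ≤ L_i/2}, so |Λ_i| = B_i where B_i = L_i if L_i is even and B_i = L_i + 1 if L_i is odd. For i = 1,2 let ρ_i : ℤ/NL_iℤ → Λ_i be the fold map sending t to the unique r ∈ Λ_i with t ≡ r (mod 2L_i) or t ≡ L_i − 1 − r (mod 2L_i). For a block configuration σ_Λ : Λ → {−1,+1} define its propagation σ_{Λ,N} ∈ {−1,+1}^{𝕋_N}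 by σ_{Λ,N}(t₁,t₂) = σ_Λ(ρ₁(t₁), ρ₂(t₂)), and let R(Λ) be the set of non-constant block configurations on Λ. Then ( Σ_{σ_Λ ∈ R(Λ)} e^{−βH_N(σ_{Λ,N})} / Z_N(β) )^{1/N²} ≤ 2^{B₁B₂} · exp(−β·(2J − h·L₁L₂/(L₁+L₂))). -/
/-- `Λ_i = {r ∈ ℤ : |r + 1/2| ≤ L/2}`, an interval of `B` consecutive integers,
where `B = L` for even `L` and `B = L+1` for odd `L`. -/
noncomputable def lamF (L : ℕ) : Finset ℤ :=
  Finset.Icc (-(((L : ℤ) + 1) / 2)) (((L : ℤ) - 1) / 2)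

/-- The block `Λ = Λ₁ × Λ₂`. -/
noncomputable def blockF (L1 L2 : ℕ) : Finset (ℤ × ℤ) := lamF L1 ×ˢ lamF L2

/-- `B_i = |Λ_i|`: `L` if `L` is even, `L+1` if `L` is odd. -/
def Bside (L : ℕ) : ℕ := if Even L then L else L + 1

/-- The fold map `ρ` sending a residue `v ∈ [0, NL)` to the unique `r ∈ Λ` with
`v ≡ r (mod 2L)` or `v ≡ L − 1 − r (mod 2L)`. -/
def fold (L : ℕ) (v : ℕ) : ℤ :=
  let m : ℤ := (v : ℤ) % (2 * L)
  if m ≤ ((L : ℤ) - 1) / 2 then m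
  else if m ≤ (L : ℤ) - 1 + ((L : ℤ) + 1) / 2 then (L : ℤ) - 1 - m
  else m - 2 * L

/-- The propagation `σ_{Λ,N}` of a block configuration `σ_Λ : Λ → {−1,+1}`:
`σ_{Λ,N}(t₁,t₂) = σ_Λ(ρ₁(t₁), ρ₂(t₂))`. -/
noncomputable def propagate (L1 L2 N : ℕ)
    (σΛ : {x : ℤ × ℤ // x ∈ blockF L1 L2} → Bool) :
    ZMod (N * L1) × ZMod (N * L2) → Bool :=
  fun t =>
    if hx : (fold L1 t.1.val, fold L2 t.2.val) ∈ blockF L1 L2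
    then σΛ ⟨(fold L1 t.1.val, fold L2 t.2.val), hx⟩ else true

/-!
The propagation `σ` of a non-constant block configuration is `2L₁`-periodic along rows and
`2L₂`-periodic along columns. A non-constant periodic row has at least two sign changes per
period, hence at least `N` disagreeing bonds; non-constant rows recur with period `2L₂`, so if
`A` rows and `B` columns are non-constant then `A + B ≥ N` (either both number at least `N/2`,
or every row, resp. every column, is non-constant). On a constant row the cell-board field
sums to zero, so the field energy is at most `h·NL₁·A` and at most `h·NL₂·B`, hence at most
`hN·L₁L₂(A + B)/(L₁ + L₂)`. Compared with the all-plus configuration, `σ` therefore costs at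
least `N(A + B)(2J − hL₁L₂/(L₁ + L₂)) ≥ N²(2J − hL₁L₂/(L₁ + L₂))`. Bounding `Z_N` below by
the all-plus term and counting at most `2^{B₁B₂}` block configurations gives the claim.
-/

open Function

section

open Finset

theorem Function.Periodic.sum_range_mul {M : Type*} [AddCommMonoid M] {f : ℕ → M} {p : ℕ}
    (hf : Periodic f p) (m : ℕ) : ∑ u ∈ range (m * p), f u = m • ∑ u ∈ range p, f u := by
  induction m with
  | zero => simp
  | succ m ih =>
    rw [add_mul, one_mul, sum_range_add, ih, succ_nsmul]
    congr 1
    refine sum_congr rfl fun u _ => ?_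
    rw [add_comm]
    simpa using hf.nat_mul m u

theorem Function.Periodic.count_mul {P : ℕ → Prop} [DecidablePred P] {p : ℕ} (hP : Periodic P p)
    (m : ℕ) : Nat.count P (m * p) = m * Nat.count P p := by
  have hind : Periodic (fun u => if P u then 1 else 0) p := fun u => by simp only [hP u]
  simpa only [Nat.count_eq_card_filter_range, card_filter, smul_eq_mul]
    using hind.sum_range_mul m

theorem Function.Periodic.le_count_mul {P : ℕ → Prop} [DecidablePred P] {p : ℕ} (hP : Periodic P p)
    (hp : 0 < p) (hex : ∃ v, P v) (m : ℕ) : m ≤ Nat.count P (m * p) := by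
  obtain ⟨v, hv⟩ := hex
  have : Nat.count P p ≠ 0 :=
    Nat.count_ne_iff_exists.2 ⟨v % p, Nat.mod_lt v hp, (hP.map_mod_nat v).symm ▸ hv⟩
  rw [hP.count_mul]
  exact Nat.le_mul_of_pos_right m (Nat.pos_of_ne_zero this)

end

namespace CellBoard

section

open Finset

theorem periodic_ne_succ {F : ℕ → Bool} {p : ℕ} (hF : Periodic F p) :
    Periodic (fun n => F n ≠ F (n + 1)) p := fun n => by
  simp only [add_right_comm n p 1, hF n, hF (n + 1)]

theorem exists_ne_succ_of_ne {F : ℕ → Bool} {a b : ℕ} (hab : a ≤ b) (hne : F a ≠ F b) :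
    ∃ i ∈ Ico a b, F i ≠ F (i + 1) := by
  induction b, hab using Nat.le_induction with
  | base => exact absurd rfl hne
  | succ b hab ih =>
    by_cases hb : F a = F b
    · exact ⟨b, mem_Ico.2 ⟨hab, b.lt_succ_self⟩, hb ▸ hne⟩
    · obtain ⟨i, hi, hi'⟩ := ih hb
      exact ⟨i, Ico_subset_Ico_right b.le_succ hi, hi'⟩

theorem two_le_count_ne_succ {F : ℕ → Bool} {p : ℕ} (hF : Periodic F p) (hp : 0 < p)
    (hnc : ∃ m n, F m ≠ F n) : 2 ≤ Nat.count (fun n => F n ≠ F (n + 1)) p := by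
  obtain ⟨r₁, r₂, h12, h2p, hne⟩ : ∃ r₁ r₂, r₁ < r₂ ∧ r₂ < p ∧ F r₁ ≠ F r₂ := by
    obtain ⟨m, n, hmn⟩ := hnc
    rw [← hF.map_mod_nat m, ← hF.map_mod_nat n] at hmn
    rcases lt_trichotomy (m % p) (n % p) with h | h | h
    · exact ⟨_, _, h, Nat.mod_lt n hp, hmn⟩
    · exact absurd (h ▸ rfl) hmn
    · exact ⟨_, _, h, Nat.mod_lt m hp, Ne.symm hmn⟩
  -- one sign change on the way from `r₁` to `r₂`, another on the way back to `r₁ + p`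
  obtain ⟨i₁, hi₁, hF₁⟩ := exists_ne_succ_of_ne h12.le hne
  obtain ⟨i₂, hi₂, hF₂⟩ := exists_ne_succ_of_ne (F := F) (a := r₂) (b := r₁ + p) (by omega)
    (by rw [hF r₁]; exact hne.symm)
  rw [mem_Ico] at hi₁ hi₂
  rw [← Nat.filter_Ico_card_eq_of_periodic r₁ p _ (periodic_ne_succ hF)]
  calc 2 = #{i₁, i₂} := (card_pair (by omega)).symm
    _ ≤ _ := card_le_card fun i hi => by
      rcases mem_insert.1 hi with rfl | hi
      · exact mem_filter.2 ⟨mem_Ico.2 (by omega), hF₁⟩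
      · rw [mem_singleton.1 hi]
        exact mem_filter.2 ⟨mem_Ico.2 (by omega), hF₂⟩

theorem two_mul_le_count_ne_succ {F : ℕ → Bool} {p : ℕ} (hF : Periodic F p) (hp : 0 < p)
    (hnc : ∃ m n, F m ≠ F n) (m : ℕ) :
    2 * m ≤ Nat.count (fun n => F n ≠ F (n + 1)) (m * p) := by
  rw [(periodic_ne_succ hF).count_mul, mul_comm 2]
  exact Nat.mul_le_mul_left m (two_le_count_ne_succ hF hp hnc)

def toSpin (b : Bool) : ℝ := if b then 1 else -1

theorem sum_range_toSpin_mul_succ (F : ℕ → Bool) (n : ℕ) :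
    ∑ u ∈ range n, toSpin (F u) * toSpin (F (u + 1))
      = n - 2 * Nat.count (fun u => F u ≠ F (u + 1)) n := by
  induction n with
  | zero => simp
  | succ n ih =>
    rw [sum_range_succ, ih, Nat.count_succ]
    cases F n <;> cases F (n + 1) <;> simp [toSpin] <;> ring

def boardField (L₁ L₂ : ℕ) (h : ℝ) (u v : ℕ) : ℝ :=
  if Even (u / L₁ + v / L₂) then h else -h

theorem boardField_comm (L₁ L₂ : ℕ) (h : ℝ) (u v : ℕ) :
    boardField L₁ L₂ h u v = boardField L₂ L₁ h v u := by
  rw [boardField, boardField, add_comm]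

theorem boardField_antiperiodic {L₁ : ℕ} (hL₁ : 0 < L₁) (L₂ : ℕ) (h : ℝ) (v : ℕ) :
    Antiperiodic (boardField L₁ L₂ h · v) L₁ := fun u => by
  simp only [boardField, Nat.add_div_right u hL₁, add_right_comm _ 1, Nat.even_add_one]
  split_ifs <;> simp

theorem sum_boardField_eq_zero {L₁ : ℕ} (hL₁ : 0 < L₁) (L₂ : ℕ) (h : ℝ) (v m : ℕ) :
    ∑ u ∈ range (m * (2 * L₁)), boardField L₁ L₂ h u v = 0 := by
  have hanti := boardField_antiperiodic hL₁ L₂ h v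
  rw [hanti.periodic_two_mul.sum_range_mul, two_mul, sum_range_add]
  simp only [add_comm L₁, hanti _, sum_neg_distrib, add_neg_cancel, smul_zero]

theorem boardField_mul_toSpin_le {h : ℝ} (hh : 0 ≤ h) (L₁ L₂ u v : ℕ) (b : Bool) :
    boardField L₁ L₂ h u v * toSpin b ≤ h := by
  unfold boardField toSpin
  split_ifs <;> linarith

/-- Vertical bonds of `G` are the horizontal bonds of `flip G`; likewise the columns of `G` are
the rows of `flip G` in `IsNonconstRow`. -/
def horizDisagreements (G : ℕ → ℕ → Bool) (a b : ℕ) : ℕ :=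
  ∑ v ∈ range b, Nat.count (fun u => G u v ≠ G (u + 1) v) a

def fieldCoupling (L₁ L₂ : ℕ) (h : ℝ) (G : ℕ → ℕ → Bool) (a b : ℕ) : ℝ :=
  ∑ v ∈ range b, ∑ u ∈ range a, boardField L₁ L₂ h u v * toSpin (G u v)

theorem sum_toSpin_mul_eq (G : ℕ → ℕ → Bool) (a b : ℕ) :
    ∑ v ∈ range b, ∑ u ∈ range a, toSpin (G u v) * toSpin (G (u + 1) v)
      = a * b - 2 * horizDisagreements G a b := by
  simp only [sum_range_toSpin_mul_succ (G · _), horizDisagreements, sum_sub_distrib,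
    ← mul_sum, sum_const, card_range, nsmul_eq_mul]
  push_cast
  ring

theorem sum_zmod_eq_sum_range {n : ℕ} [NeZero n] (f : ZMod n → ℝ) :
    ∑ t, f t = ∑ k ∈ range n, f k := by
  refine sum_nbij' ZMod.val Nat.cast (fun t _ => mem_range.2 t.val_lt) (by simp)
    (fun t _ => ZMod.natCast_zmod_val t) (fun k hk => ZMod.val_cast_of_lt (mem_range.1 hk))
    (fun t _ => by rw [ZMod.natCast_zmod_val])

theorem sum_torus_eq_sum_range {a b : ℕ} [NeZero a] [NeZero b] (f : ZMod a × ZMod b → ℝ) :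
    ∑ t, f t = ∑ v ∈ range b, ∑ u ∈ range a, f (u, v) := by
  rw [Fintype.sum_prod_type_right, sum_zmod_eq_sum_range fun y => ∑ x, f (x, y)]
  exact sum_congr rfl fun v _ => sum_zmod_eq_sum_range _

theorem ham_eq_disagreements_sub_fieldCoupling {a b : ℕ} [NeZero a] [NeZero b] (J h : ℝ) (L₁ L₂ : ℕ)
    (σ : ZMod a × ZMod b → Bool) :
    ham J (cellField L₁ L₂ h) σ
      = -(2 * J * a * b)
        + 2 * J * (horizDisagreements (fun u v => σ (u, v)) a b
          + horizDisagreements (flip fun u v => σ (u, v)) b a)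
        - fieldCoupling L₁ L₂ h (fun u v => σ (u, v)) a b := by
  have horiz := sum_toSpin_mul_eq (fun u v => σ (u, v)) a b
  have vert := sum_toSpin_mul_eq (flip fun u v => σ (u, v)) b a
  rw [sum_comm] at vert
  have hspin : ∀ t, spin σ t = toSpin (σ t) := fun _ => rfl
  have field : ∑ v ∈ range b, ∑ u ∈ range a, cellField L₁ L₂ h ((u : ZMod a), (v : ZMod b))
      * toSpin (σ (u, v)) = fieldCoupling L₁ L₂ h (fun u v => σ (u, v)) a b :=
    sum_congr rfl fun v hv => sum_congr rfl fun u hu => by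
      rw [cellField, ZMod.val_cast_of_lt (mem_range.1 hu), ZMod.val_cast_of_lt (mem_range.1 hv)]
      rfl
  simp only [ham, hspin, sum_torus_eq_sum_range, sum_add_distrib, Prod.mk_add_mk, add_zero, field]
  simp only [flip, Nat.cast_succ] at horiz vert
  rw [horiz, vert]
  ring

def IsNonconstRow (G : ℕ → ℕ → Bool) (v : ℕ) : Prop := ∃ u u', G u v ≠ G u' v

section

open scoped Classical

variable {G : ℕ → ℕ → Bool}

theorem two_mul_mul_count_le_horizDisagreements {p : ℕ} (hp : 0 < p)
    (hG : ∀ v, Periodic (G · v) p) (m b : ℕ) :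
    2 * m * Nat.count (IsNonconstRow G) b ≤ horizDisagreements G (m * p) b := by
  rw [Nat.count_eq_card_filter_range, card_filter, mul_sum, horizDisagreements]
  refine sum_le_sum fun v _ => ?_
  split_ifs with hv
  · obtain ⟨u, u', hne⟩ := hv
    simpa using two_mul_le_count_ne_succ (hG v) hp ⟨u, u', hne⟩ m
  · simp

theorem sum_boardField_mul_toSpin_of_const {L₁ : ℕ} (hL₁ : 0 < L₁) (L₂ : ℕ) (h : ℝ) {v : ℕ}
    (hv : ¬IsNonconstRow G v) (m : ℕ) :
    ∑ u ∈ range (m * (2 * L₁)), boardField L₁ L₂ h u v * toSpin (G u v) = 0 := by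
  have hconst : ∀ u, G u v = G 0 v := fun u => by
    by_contra hne
    exact hv ⟨u, 0, hne⟩
  simp only [hconst, ← sum_mul, sum_boardField_eq_zero hL₁, zero_mul]

theorem fieldCoupling_le {L₁ : ℕ} (hL₁ : 0 < L₁) (L₂ : ℕ) {h : ℝ} (hh : 0 ≤ h) (m b : ℕ) :
    fieldCoupling L₁ L₂ h G (m * (2 * L₁)) b
      ≤ h * (m * (2 * L₁) : ℕ) * Nat.count (IsNonconstRow G) b := by
  rw [Nat.count_eq_card_filter_range, card_filter, Nat.cast_sum, mul_sum, fieldCoupling]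
  refine sum_le_sum fun v _ => ?_
  split_ifs with hv
  · calc _ ≤ ∑ u ∈ range (m * (2 * L₁)), h :=
          sum_le_sum fun u _ => boardField_mul_toSpin_le hh _ _ _ _ _
      _ = _ := by simp [mul_comm]
  · simp [sum_boardField_mul_toSpin_of_const hL₁ L₂ h hv]

theorem fieldCoupling_flip (L₁ L₂ : ℕ) (h : ℝ) (a b : ℕ) :
    fieldCoupling L₂ L₁ h (flip G) b a = fieldCoupling L₁ L₂ h G a b := by
  rw [fieldCoupling, fieldCoupling, sum_comm]
  simp only [flip, boardField_comm L₂ L₁]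

theorem isNonconstRow_flip_of_forall_not (hrows : ∀ v, ¬IsNonconstRow G v)
    (hG : ∃ u v u' v', G u v ≠ G u' v') (u : ℕ) : IsNonconstRow (flip G) u := by
  obtain ⟨u₁, v₁, u₂, v₂, hne⟩ := hG
  have hconst : ∀ u u' v, G u v = G u' v := fun u u' v => by
    by_contra h
    exact hrows v ⟨u, u', h⟩
  exact ⟨v₁, v₂, by simpa only [flip, hconst u u₁ v₁, hconst u u₂ v₂] using hne⟩

theorem two_mul_le_count_add_count {p q : ℕ} (hp : 2 ≤ p) (hq : 2 ≤ q)
    (hrow : ∀ v, Periodic (G · v) p) (hcol : ∀ u, Periodic (G u) q)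
    (hG : ∃ u v u' v', G u v ≠ G u' v') (m : ℕ) :
    2 * m ≤ Nat.count (IsNonconstRow G) (m * q) + Nat.count (IsNonconstRow (flip G)) (m * p) := by
  have hrowP : Periodic (IsNonconstRow G) q := fun v => by
    simp only [IsNonconstRow, fun u => hcol u v]
  have hcolP : Periodic (IsNonconstRow (flip G)) p := fun u => by
    simp only [IsNonconstRow, flip, fun v => hrow v u]
  -- non-constant rows recur with period `q`: either there are none, and then every column is
  -- non-constant, or there are at least `m` of them
  by_cases hr : ∃ v, IsNonconstRow G v
  · by_cases hc : ∃ u, IsNonconstRow (flip G) u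
    · have := hrowP.le_count_mul (by omega) hr m
      have := hcolP.le_count_mul (by omega) hc m
      omega
    · have hG' : ∃ u v u' v', flip G u v ≠ flip G u' v' := by
        obtain ⟨u, v, u', v', h⟩ := hG
        exact ⟨v, u, v', u', h⟩
      have hall : ∀ v, IsNonconstRow G v :=
        isNonconstRow_flip_of_forall_not (not_exists.1 hc) hG'
      rw [Nat.count_of_forall fun v _ => hall v]
      nlinarith
  · rw [not_exists] at hr
    rw [Nat.count_of_forall fun u _ => isNonconstRow_flip_of_forall_not hr hG u]
    nlinarith

theorem sq_mul_gap_le_of_bounds {J h l₁ l₂ n A B D F : ℝ} (hl₁ : 0 < l₁) (hl₂ : 0 < l₂) (hJ : 0 ≤ J)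
    (hgap : 0 ≤ 2 * J - h * l₁ * l₂ / (l₁ + l₂)) (hn : 0 ≤ n) (hAB : n ≤ A + B)
    (hD : n * (A + B) ≤ D) (hFA : F ≤ h * (n * l₁) * A) (hFB : F ≤ h * (n * l₂) * B) :
    n ^ 2 * (2 * J - h * l₁ * l₂ / (l₁ + l₂)) ≤ 2 * J * D - F := by
  have hF : F ≤ h * l₁ * l₂ / (l₁ + l₂) * (n * (A + B)) := by
    rw [div_mul_eq_mul_div, le_div_iff₀ (by positivity)]
    linear_combination l₂ * hFA + l₁ * hFB
  calc n ^ 2 * (2 * J - h * l₁ * l₂ / (l₁ + l₂))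
      ≤ n * (A + B) * (2 * J - h * l₁ * l₂ / (l₁ + l₂)) := by
        rw [sq]; gcongr
    _ ≤ 2 * J * D - F := by linarith [mul_le_mul_of_nonneg_left hD (by linarith : 0 ≤ 2 * J)]

theorem sq_mul_gap_le_excess_energy {N L₁ L₂ : ℕ} (hL₁ : 0 < L₁) (hL₂ : 0 < L₂) (hN : Even N)
    {J h : ℝ} (hJ : 0 ≤ J) (hh : 0 ≤ h) (hgap : 0 ≤ 2 * J - h * L₁ * L₂ / (L₁ + L₂))
    {G : ℕ → ℕ → Bool} (hrow : ∀ v, Periodic (G · v) (2 * L₁))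
    (hcol : ∀ u, Periodic (G u) (2 * L₂)) (hG : ∃ u v u' v', G u v ≠ G u' v') :
    N ^ 2 * (2 * J - h * L₁ * L₂ / (L₁ + L₂))
      ≤ 2 * J * (horizDisagreements G (N * L₁) (N * L₂)
          + horizDisagreements (flip G) (N * L₂) (N * L₁))
        - fieldCoupling L₁ L₂ h G (N * L₁) (N * L₂) := by
  obtain ⟨m, hm⟩ := hN
  have e₁ : m * (2 * L₁) = N * L₁ := by rw [hm]; ring
  have e₂ : m * (2 * L₂) = N * L₂ := by rw [hm]; ring
  have hH := two_mul_mul_count_le_horizDisagreements (by omega) hrow m (N * L₂)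
  have hV := two_mul_mul_count_le_horizDisagreements (G := flip G) (by omega) hcol m (N * L₁)
  have hFA := fieldCoupling_le (G := G) hL₁ L₂ hh m (N * L₂)
  have hFB := fieldCoupling_le (G := flip G) hL₂ L₁ hh m (N * L₁)
  have hAB := two_mul_le_count_add_count (by omega) (by omega) hrow hcol hG m
  rw [e₁] at hH hFA
  rw [e₂] at hV hFB
  rw [e₁, e₂] at hAB
  rw [fieldCoupling_flip] at hFB
  generalize Nat.count (IsNonconstRow G) (N * L₂) = A at *
  generalize Nat.count (IsNonconstRow (flip G)) (N * L₁) = B at *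
  have hD : N * (A + B) ≤ horizDisagreements G (N * L₁) (N * L₂)
      + horizDisagreements (flip G) (N * L₂) (N * L₁) :=
    calc N * (A + B) = 2 * m * A + 2 * m * B := by rw [hm]; ring
      _ ≤ _ := add_le_add hH hV
  exact sq_mul_gap_le_of_bounds (A := A) (B := B) (by positivity) (by positivity) hJ hgap
    (by positivity) (by exact_mod_cast (show N ≤ A + B by omega)) (by exact_mod_cast hD)
    (by exact_mod_cast hFA) (by exact_mod_cast hFB)

theorem ham_const_add_le_ham {N L₁ L₂ : ℕ} [NeZero (N * L₁)] [NeZero (N * L₂)]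
    (hL₁ : 0 < L₁) (hL₂ : 0 < L₂) (hN : Even N) {J h : ℝ} (hJ : 0 ≤ J) (hh : 0 ≤ h)
    (hgap : 0 ≤ 2 * J - h * L₁ * L₂ / (L₁ + L₂)) (σ : ZMod (N * L₁) × ZMod (N * L₂) → Bool)
    (hrow : ∀ v : ℕ, Periodic (fun u : ℕ => σ (u, v)) (2 * L₁))
    (hcol : ∀ u : ℕ, Periodic (fun v : ℕ => σ (u, v)) (2 * L₂))
    (hσ : ∃ u v u' v' : ℕ, σ (u, v) ≠ σ (u', v')) :
    ham J (cellField L₁ L₂ h) (fun _ : ZMod (N * L₁) × ZMod (N * L₂) => true)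
        + N ^ 2 * (2 * J - h * L₁ * L₂ / (L₁ + L₂))
      ≤ ham J (cellField L₁ L₂ h) σ := by
  have hconst : fieldCoupling L₁ L₂ h (fun _ _ => true) (N * L₁) (N * L₂) = 0 := by
    obtain ⟨m, hm⟩ := hN
    refine sum_eq_zero fun v _ => ?_
    rw [show N * L₁ = m * (2 * L₁) by rw [hm]; ring]
    exact sum_boardField_mul_toSpin_of_const (G := fun _ _ => true) hL₁ L₂ h
      (fun ⟨_, _, hne⟩ => hne rfl) m
  have key := sq_mul_gap_le_excess_energy hL₁ hL₂ hN hJ hh hgap hrow hcol hσ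
  rw [ham_eq_disagreements_sub_fieldCoupling, ham_eq_disagreements_sub_fieldCoupling]
  simp only [horizDisagreements, flip, ne_eq, not_true_eq_false, Nat.count_false, sum_const_zero,
    hconst] at key ⊢
  linarith

end

end

theorem fold_mem {L : ℕ} (hL : 0 < L) (v : ℕ) : fold L v ∈ lamF L := by
  have h₀ : 0 ≤ (v : ℤ) % (2 * L) := Int.emod_nonneg _ (by omega)
  have h₁ : (v : ℤ) % (2 * L) < 2 * L := Int.emod_lt_of_pos _ (by omega)
  simp only [fold, lamF, Finset.mem_Icc]
  split_ifs <;> omega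

theorem exists_fold_eq {L : ℕ} {r : ℤ} (hr : r ∈ lamF L) : ∃ v, fold L v = r := by
  simp only [lamF, Finset.mem_Icc] at hr
  obtain ⟨v, hv, hvr⟩ : ∃ v : ℕ, (v : ℤ) < 2 * L ∧ (v = r ∨ v = r + 2 * L) := by
    rcases le_or_gt 0 r with h | h
    · exact ⟨r.toNat, by omega, .inl (Int.toNat_of_nonneg h)⟩
    · exact ⟨(r + 2 * L).toNat, by omega, .inr (Int.toNat_of_nonneg (by omega))⟩
  refine ⟨v, ?_⟩
  simp only [fold, Int.emod_eq_of_lt (Int.natCast_nonneg v) hv]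
  split_ifs <;> omega

theorem fold_add_two_mul (L v : ℕ) : fold L (v + 2 * L) = fold L v := by
  simp only [fold, Nat.cast_add, Nat.cast_mul, Nat.cast_ofNat, Int.add_emod_right]

theorem fold_mod_of_dvd {L n : ℕ} (h : 2 * L ∣ n) (v : ℕ) : fold L (v % n) = fold L v := by
  have : ((v % n : ℕ) : ℤ) % (2 * L) = (v : ℤ) % (2 * L) := by
    exact_mod_cast congrArg (Nat.cast : ℕ → ℤ) (Nat.mod_mod_of_dvd v h)
  simp only [fold, this]

theorem card_lamF (L : ℕ) : (lamF L).card = Bside L := by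
  rw [lamF, Int.card_Icc, Bside]
  rcases Nat.even_or_odd L with ⟨k, hk⟩ | ⟨k, hk⟩
  · rw [if_pos ⟨k, hk⟩]; omega
  · rw [if_neg (Nat.not_even_iff_odd.2 ⟨k, hk⟩)]; omega

theorem propagate_natCast {N L₁ L₂ : ℕ} (hL₁ : 0 < L₁) (hL₂ : 0 < L₂) (hN : Even N)
    (σΛ : {x : ℤ × ℤ // x ∈ blockF L₁ L₂} → Bool) (u v : ℕ) :
    propagate L₁ L₂ N σΛ (u, v)
      = σΛ ⟨(fold L₁ u, fold L₂ v), Finset.mem_product.2 ⟨fold_mem hL₁ u, fold_mem hL₂ v⟩⟩ := by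
  obtain ⟨m, rfl⟩ := hN
  have hdvd : ∀ L, 2 * L ∣ (m + m) * L := fun L => ⟨m, by ring⟩
  simp only [propagate, ZMod.val_natCast, fold_mod_of_dvd (hdvd _)]
  exact dif_pos (Finset.mem_product.2 ⟨fold_mem hL₁ u, fold_mem hL₂ v⟩)

theorem ham_const_add_le_ham_propagate {N L₁ L₂ : ℕ} [NeZero (N * L₁)] [NeZero (N * L₂)]
    (hL₁ : 0 < L₁) (hL₂ : 0 < L₂) (hN : Even N) {J h : ℝ} (hJ : 0 ≤ J) (hh : 0 ≤ h)
    (hgap : 0 ≤ 2 * J - h * L₁ * L₂ / (L₁ + L₂))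
    {σΛ : {x : ℤ × ℤ // x ∈ blockF L₁ L₂} → Bool} (hσΛ : ∃ x y, σΛ x ≠ σΛ y) :
    ham J (cellField L₁ L₂ h) (fun _ : ZMod (N * L₁) × ZMod (N * L₂) => true)
        + N ^ 2 * (2 * J - h * L₁ * L₂ / (L₁ + L₂))
      ≤ ham J (cellField L₁ L₂ h) (propagate L₁ L₂ N σΛ) := by
  refine ham_const_add_le_ham hL₁ hL₂ hN hJ hh hgap _ (fun v u => ?_) (fun u v => ?_) ?_
  · simp only [propagate_natCast hL₁ hL₂ hN, fold_add_two_mul]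
  · simp only [propagate_natCast hL₁ hL₂ hN, fold_add_two_mul]
  · obtain ⟨⟨⟨r₁, r₂⟩, hr⟩, ⟨⟨r₁', r₂'⟩, hr'⟩, hne⟩ := hσΛ
    rw [blockF, Finset.mem_product] at hr hr'
    obtain ⟨u, rfl⟩ := exists_fold_eq hr.1
    obtain ⟨v, rfl⟩ := exists_fold_eq hr.2
    obtain ⟨u', rfl⟩ := exists_fold_eq hr'.1
    obtain ⟨v', rfl⟩ := exists_fold_eq hr'.2
    exact ⟨u, v, u', v', by simpa only [propagate_natCast hL₁ hL₂ hN] using hne⟩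

theorem gap_nonneg {J h l₁ l₂ : ℝ} (hl₁ : 0 < l₁) (hl₂ : 0 < l₂)
    (hcond : h < 2 * J / l₁ + 2 * J / l₂) : 0 ≤ 2 * J - h * l₁ * l₂ / (l₁ + l₂) := by
  have : h * (l₁ * l₂) < 2 * J * (l₁ + l₂) := by
    rw [div_add_div _ _ hl₁.ne' hl₂.ne', lt_div_iff₀ (by positivity)] at hcond
    linarith
  rw [sub_nonneg, div_le_iff₀ (by positivity)]
  linarith

open Real in
theorem sum_exp_div_le_card_mul_exp {ι : Type*} (s : Finset ι) (E : ι → ℝ) {Z E₀ D β : ℝ}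
    (hβ : 0 ≤ β) (hZ : exp (-β * E₀) ≤ Z) (hE : ∀ i ∈ s, E₀ + D ≤ E i) :
    (∑ i ∈ s, exp (-β * E i)) / Z ≤ s.card * exp (-β * D) := by
  have hterm : ∀ i ∈ s, exp (-β * E i) ≤ exp (-β * E₀) * exp (-β * D) := fun i hi => by
    rw [← exp_add, exp_le_exp]
    linarith [mul_le_mul_of_nonneg_left (hE i hi) hβ]
  rw [div_le_iff₀ ((exp_pos _).trans_le hZ)]
  calc ∑ i ∈ s, exp (-β * E i) ≤ s.card * (exp (-β * E₀) * exp (-β * D)) := by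
        simpa using Finset.sum_le_card_nsmul s _ _ hterm
    _ = s.card * exp (-β * D) * exp (-β * E₀) := by ring
    _ ≤ s.card * exp (-β * D) * Z := by gcongr

open Real in
theorem rpow_one_div_le_of_le_mul_exp {x C n a : ℝ} (hx : 0 ≤ x) (hC : 1 ≤ C) (hn : 1 ≤ n)
    (h : x ≤ C * exp (n * a)) : x ^ (1 / n) ≤ C * exp a := by
  have hn₀ : 0 < n := by linarith
  calc x ^ (1 / n) ≤ (C * exp (n * a)) ^ (1 / n) := by gcongr
    _ = C ^ (1 / n) * exp a := by
        rw [mul_rpow (by linarith) (exp_pos _).le, ← exp_mul]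
        field_simp
    _ ≤ C * exp a := by
        gcongr
        exact rpow_le_self_of_one_le hC (by rw [div_le_one hn₀]; exact hn)

end CellBoard

/-- inequality (4.28): if `h < 2J/L₁ + 2J/L₂` then, with `R(Λ)` the
set of non-constant block configurations on `Λ`,
`( Σ_{σ_Λ ∈ R(Λ)} e^{−βH_N(σ_{Λ,N})} / Z_N(β) )^{1/N²}
   ≤ 2^{B₁B₂} · exp(−β·(2J − h·L₁L₂/(L₁+L₂)))`. -/
theorem bad_block_bound (L1 L2 N : ℕ) (hL1 : 0 < L1) (hL2 : 0 < L2)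
    (hN : 2 ≤ N) (hNeven : Even N) [NeZero (N * L1)] [NeZero (N * L2)]
    (J h β : ℝ) (hJ : 0 < J) (hh : 0 < h) (hβ : 0 ≤ β)
    (hcond : h < 2 * J / (L1 : ℝ) + 2 * J / (L2 : ℝ)) :
    ((∑ σΛ ∈ Finset.univ.filter
          (fun σΛ : {x : ℤ × ℤ // x ∈ blockF L1 L2} → Bool => ∃ u v, σΛ u ≠ σΛ v),
        Real.exp (-β * ham J (cellField L1 L2 h) (propagate L1 L2 N σΛ)))
      / Zfun (a := N * L1) (b := N * L2) β J (cellField L1 L2 h)) ^ (1 / (N : ℝ) ^ 2)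
    ≤ 2 ^ (Bside L1 * Bside L2) *
        Real.exp (-β * (2 * J - h * (L1 : ℝ) * (L2 : ℝ) / ((L1 : ℝ) + (L2 : ℝ)))) := by
  set R := Finset.univ.filter
    (fun σΛ : {x : ℤ × ℤ // x ∈ blockF L1 L2} → Bool => ∃ u v, σΛ u ≠ σΛ v)
  have hgap := CellBoard.gap_nonneg (J := J) (h := h) (by positivity) (by positivity) hcond
  have hZ : Real.exp (-β * ham J (cellField L1 L2 h) fun _ => true)
      ≤ Zfun (a := N * L1) (b := N * L2) β J (cellField L1 L2 h) :=
    Finset.single_le_sum (f := fun σ => Real.exp (-β * ham J (cellField L1 L2 h) σ))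
      (fun _ _ => (Real.exp_pos _).le) (Finset.mem_univ _)
  have hratio := CellBoard.sum_exp_div_le_card_mul_exp R _ hβ hZ fun σΛ hσΛ =>
    CellBoard.ham_const_add_le_ham_propagate hL1 hL2 hNeven hJ.le hh.le hgap
      (Finset.mem_filter.1 hσΛ).2
  have hcard : R.card ≤ 2 ^ (Bside L1 * Bside L2) := by
    refine (Finset.card_le_univ _).trans_eq ?_
    rw [Fintype.card_fun, Fintype.card_bool, Fintype.card_coe, blockF, Finset.card_product,
      CellBoard.card_lamF, CellBoard.card_lamF]
  refine CellBoard.rpow_one_div_le_of_le_mul_exp ?_ (one_le_pow₀ one_le_two) (one_le_pow₀ ?_) ?_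
  · exact div_nonneg (Finset.sum_nonneg fun _ _ => (Real.exp_pos _).le)
      ((Real.exp_pos _).le.trans hZ)
  · exact_mod_cast (by omega : 1 ≤ N)
  calc _ ≤ _ := hratio
    _ ≤ 2 ^ (Bside L1 * Bside L2) * Real.exp (-β * (N ^ 2 * _)) := by gcongr; exact_mod_cast hcard
    _ = _ := by ring_nf
end

section
/- (Peierls bound on the fundamental torus for the alternating-strips model.) Let L be a positive integer, J > 0, h > 0 with h < 2J/L. On the torus 𝕋* = (ℤ/2ℤ) × (ℤ/2Lℤ) with the alternating-strips field, every non-constant configuration σ ∈ {−1,+1}^{𝕋*} satisfies H_*(σ) − H_*(σ⁺) ≥ 4·(2J − hL), where σ⁺ ≡ +1. -/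
/-- The alternating-strips external field on a torus `(ℤ/aℤ) × (ℤ/bℤ)`, via canonical
representatives: `+h` if `⌊t₂/L⌋` is even and `−h` otherwise. -/
noncomputable def stripsFieldT {a b : ℕ} (L : ℕ) (h : ℝ) (t : ZMod a × ZMod b) : ℝ :=
  if Even (t.2.val / L) then h else -h

/-!
Relative to `σ⁺ ≡ +1`, the energy of `σ` is `2J` times the number of disagreeing (directed) bonds
plus `Σ_t h_L(t) (1 - σ(t))`. Since `|h_L| = h` and `h_L` sums to zero over the torus, the field
term is at least `-h · |𝕋*| = -4hL`. A non-constant configuration on the `2 × 2L` torus has at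
least four disagreeing bonds: a non-constant column has at least two change points, a constant
column next to a non-constant one disagrees with it on some row (a pair counted twice, since the
horizontal direction has period `2`), and two distinct constant columns disagree on all
`2L ≥ 2` rows.
-/

open Finset

section Cycle

variable {α : Type*} {n : ℕ} [NeZero n]

theorem eq_of_forall_eq_add_one {f : ZMod n → α} (hf : ∀ z, f z = f (z + 1)) (x y : ZMod n) :
    f x = f y := by
  have hper : Function.Periodic f 1 := fun z => (hf z).symm
  simpa using (hper.nsmul (y - x).val x).symm

-- A single change point is impossible: the increments of an indicator telescope to `0`.
theorem two_le_card_ne_add_one [DecidableEq α] {f : ZMod n → α} {x y : ZMod n} (hxy : f x ≠ f y) :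
    2 ≤ #{z | f z ≠ f (z + 1)} := by
  obtain ⟨c, hc⟩ : ∃ c, f c ≠ f (c + 1) := by
    by_contra! h
    exact hxy (eq_of_forall_eq_add_one h x y)
  refine one_lt_card.mpr ⟨c, by simpa using hc, ?_⟩
  by_contra! hrest
  have hothers : ∀ d, d ≠ c → f d = f (d + 1) := fun d hdc => by
    by_contra hd
    exact hdc (hrest d (by simpa using hd)).symm
  set g : ZMod n → ℤ := fun z => if f z = f c then 1 else 0
  have htele : ∑ z, (g (z + 1) - g z) = 0 := by
    rw [sum_sub_distrib, sub_eq_zero]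
    exact Equiv.sum_comp (Equiv.addRight (1 : ZMod n)) g
  rw [sum_eq_single c (fun d _ hdc => by simp [g, hothers d hdc]) (by simp)] at htele
  simp [g, Ne.symm hc] at htele

end Cycle

theorem sum_zmod_two {M : Type*} [AddCommMonoid M] (g : ZMod 2 → M) :
    ∑ x, g x = g 0 + g 1 :=
  Fin.sum_univ_two g

theorem exists_ne_of_forall_eq {α β : Type*} {f g : β → α} (hf : ∀ y y', f y = f y')
    {y y' : β} (hg : g y ≠ g y') : ∃ z, f z ≠ g z := by
  by_contra! hfg
  exact hg (by rw [← hfg, ← hfg, hf])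

section TwoByN

variable {α : Type*} [DecidableEq α] {n : ℕ} [NeZero n]

theorem card_filter_ne_add_one_zero (σ : ZMod 2 × ZMod n → α) :
    #{t | σ t ≠ σ (t + (1, 0))} = 2 * #{y | σ (0, y) ≠ σ (1, y)} := by
  simp only [card_filter, Fintype.sum_prod_type, sum_zmod_two, Prod.mk_add_mk, add_zero]
  rw [show (1 : ZMod 2) + 1 = 0 from rfl, zero_add]
  simp only [ne_comm (a := σ (1, _))]
  ring

theorem card_filter_ne_zero_add_one (σ : ZMod 2 × ZMod n → α) :
    #{t | σ t ≠ σ (t + (0, 1))} =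
      #{y | σ (0, y) ≠ σ (0, y + 1)} + #{y | σ (1, y) ≠ σ (1, y + 1)} := by
  simp only [card_filter, Fintype.sum_prod_type, sum_zmod_two, Prod.mk_add_mk, add_zero]

theorem four_le_card_disagreeing_bonds (hn : 2 ≤ n) (σ : ZMod 2 × ZMod n → α)
    (hσ : ∃ t u, σ t ≠ σ u) :
    4 ≤ #{t | σ t ≠ σ (t + (1, 0))} + #{t | σ t ≠ σ (t + (0, 1))} := by
  rw [card_filter_ne_add_one_zero, card_filter_ne_zero_add_one]
  have hmixed : ∀ z, σ (0, z) ≠ σ (1, z) → 1 ≤ #{y | σ (0, y) ≠ σ (1, y)} := fun z hz =>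
    card_pos.mpr ⟨z, by simpa using hz⟩
  by_cases h0 : ∃ y y', σ (0, y) ≠ σ (0, y')
  all_goals by_cases h1 : ∃ y y', σ (1, y) ≠ σ (1, y')
  · obtain ⟨y, y', h0⟩ := h0
    obtain ⟨z, z', h1⟩ := h1
    have := two_le_card_ne_add_one (f := fun y => σ (0, y)) h0
    have := two_le_card_ne_add_one (f := fun y => σ (1, y)) h1
    omega
  · push Not at h1
    obtain ⟨y, y', h0⟩ := h0
    obtain ⟨z, hz⟩ := exists_ne_of_forall_eq (g := fun y => σ (0, y)) h1 h0
    have := two_le_card_ne_add_one (f := fun y => σ (0, y)) h0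
    have := hmixed z (Ne.symm hz)
    omega
  · push Not at h0
    obtain ⟨y, y', h1⟩ := h1
    obtain ⟨z, hz⟩ := exists_ne_of_forall_eq (g := fun y => σ (1, y)) h0 h1
    have := two_le_card_ne_add_one (f := fun y => σ (1, y)) h1
    have := hmixed z hz
    omega
  · push Not at h0 h1
    obtain ⟨t, u, htu⟩ := hσ
    have h01 : σ (0, 0) ≠ σ (1, 0) := fun h => htu <| by
      have hconst : ∀ t : ZMod 2 × ZMod n, σ t = σ (0, 0) := by
        rintro ⟨x, y⟩
        fin_cases x
        exacts [h0 y 0, (h1 y 0).trans h.symm]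
      rw [hconst t, hconst u]
    have hall : #{y | σ (0, y) ≠ σ (1, y)} = n := by
      rw [filter_true_of_mem (fun y _ => by rwa [h0 y 0, h1 y 0]), card_univ, ZMod.card]
    omega

end TwoByN

theorem sum_zmod_val {M : Type*} [AddCommMonoid M] (n : ℕ) [NeZero n] (g : ℕ → M) :
    ∑ y : ZMod n, g y.val = ∑ i ∈ range n, g i :=
  sum_nbij' (fun y => y.val) (fun i => (i : ZMod n))
    (fun y _ => mem_range.mpr (ZMod.val_lt y)) (fun _ _ => mem_univ _)
    (fun y _ => ZMod.natCast_zmod_val y) (fun _ hi => ZMod.val_cast_of_lt (mem_range.mp hi))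
    (fun _ _ => rfl)

section Torus

variable {a b : ℕ}

theorem spin_mul_spin (σ : ZMod a × ZMod b → Bool) (t u : ZMod a × ZMod b) :
    spin σ t * spin σ u = 1 - 2 * if σ t ≠ σ u then 1 else 0 := by
  unfold spin
  cases σ t <;> cases σ u <;> norm_num

theorem abs_spin (σ : ZMod a × ZMod b → Bool) (t : ZMod a × ZMod b) : |spin σ t| = 1 := by
  unfold spin
  split_ifs <;> simp

variable [NeZero a] [NeZero b]

theorem ham_sub_ham_true (J : ℝ) (hf : ZMod a × ZMod b → ℝ) (σ : ZMod a × ZMod b → Bool) :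
    ham J hf σ - ham J hf (fun _ => true) =
      2 * J * (#{t | σ t ≠ σ (t + (1, 0))} + #{t | σ t ≠ σ (t + (0, 1))} : ℕ)
        + ∑ t, hf t * (1 - spin σ t) := by
  have hspin_true : ∀ t, spin (fun _ : ZMod a × ZMod b => true) t = 1 := fun _ => rfl
  simp only [ham, spin_mul_spin, hspin_true]
  simp only [sum_add_distrib, sum_sub_distrib, ← mul_sum, sum_boole, mul_sub, mul_one]
  push_cast
  ring

theorem sum_sub_card_mul_le_sum_mul_one_sub_spin {hf : ZMod a × ZMod b → ℝ} {h : ℝ}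
    (hbound : ∀ t, |hf t| ≤ h) (σ : ZMod a × ZMod b → Bool) :
    ∑ t, hf t - Fintype.card (ZMod a × ZMod b) * h ≤ ∑ t, hf t * (1 - spin σ t) := by
  rw [← card_univ, ← nsmul_eq_mul, ← sum_const, ← sum_sub_distrib]
  refine sum_le_sum fun t _ => ?_
  have : hf t * spin σ t ≤ h := by
    calc hf t * spin σ t ≤ |hf t * spin σ t| := le_abs_self _
      _ = |hf t| := by rw [abs_mul, abs_spin, mul_one]
      _ ≤ h := hbound t
  linarith

end Torus

theorem sum_range_two_mul_ite_even_div {L : ℕ} (hL : 0 < L) (h : ℝ) :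
    ∑ i ∈ range (2 * L), (if Even (i / L) then h else -h) = 0 := by
  have hlow : ∀ i ∈ range L, (if Even (i / L) then h else -h) = h := fun i hi => by
    simp [Nat.div_eq_of_lt (mem_range.mp hi)]
  have hhigh : ∀ i ∈ range L, (if Even ((L + i) / L) then h else -h) = -h := fun i hi => by
    simp [Nat.add_div_left i hL, Nat.div_eq_of_lt (mem_range.mp hi)]
  rw [two_mul, sum_range_add, sum_congr rfl hlow, sum_congr rfl hhigh]
  simp

theorem abs_stripsFieldT {a b : ℕ} (L : ℕ) (h : ℝ) (t : ZMod a × ZMod b) :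
    |stripsFieldT L h t| = |h| := by
  unfold stripsFieldT
  split_ifs <;> simp

theorem sum_stripsFieldT {a L : ℕ} [NeZero a] [NeZero (2 * L)] (hL : 0 < L) (h : ℝ) :
    ∑ t : ZMod a × ZMod (2 * L), stripsFieldT L h t = 0 := by
  rw [Fintype.sum_prod_type]
  refine sum_eq_zero fun x _ => ?_
  rw [← sum_range_two_mul_ite_even_div hL h]
  exact sum_zmod_val (2 * L) fun i => if Even (i / L) then h else -h

theorem peierls_bound_fundamental_torus_strips_general (L : ℕ) (hL : 0 < L) [NeZero (2 * L)]
    (J h : ℝ) (hJ : 0 < J) (hh : 0 < h)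
    (σ : ZMod 2 × ZMod (2 * L) → Bool) (hσ : ∃ t u, σ t ≠ σ u) :
    ham J (stripsFieldT L h) σ
        - ham J (stripsFieldT L h) (fun _ : ZMod 2 × ZMod (2 * L) => true)
      ≥ 4 * (2 * J - h * (L : ℝ)) := by
  have hbonds : (4 : ℝ) ≤ (#{t | σ t ≠ σ (t + (1, 0))} + #{t | σ t ≠ σ (t + (0, 1))} : ℕ) := by
    exact_mod_cast four_le_card_disagreeing_bonds (by omega) σ hσ
  have hfield := sum_sub_card_mul_le_sum_mul_one_sub_spin
    (fun t => (abs_stripsFieldT L h t).trans_le (abs_of_pos hh).le) σ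
  rw [sum_stripsFieldT hL, Fintype.card_prod, ZMod.card, ZMod.card] at hfield
  push_cast at hfield
  rw [ham_sub_ham_true]
  nlinarith [mul_le_mul_of_nonneg_left hbonds hJ.le]

/-- Peierls bound on the fundamental torus, strips model: if
`h < 2J/L`, every non-constant configuration `σ` on `𝕋* = (ℤ/2ℤ) × (ℤ/2Lℤ)` with the
alternating-strips field satisfies `H_*(σ) − H_*(σ⁺) ≥ 4·(2J − hL)`, where `σ⁺ ≡ +1`. -/
theorem peierls_bound_fundamental_torus_strips (L : ℕ) (hL : 0 < L) [NeZero (2 * L)]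
    (J h : ℝ) (hJ : 0 < J) (hh : 0 < h) (hcond : h < 2 * J / (L : ℝ))
    (σ : ZMod 2 × ZMod (2 * L) → Bool) (hσ : ∃ t u, σ t ≠ σ u) :
    ham J (stripsFieldT L h) σ
        - ham J (stripsFieldT L h) (fun _ : ZMod 2 × ZMod (2 * L) => true)
      ≥ 4 * (2 * J - h * (L : ℝ)) :=
  peierls_bound_fundamental_torus_strips_general L hL J h hJ hh σ hσ
end
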